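/- arXiv:2206.12135 — 5 statements merged into one kernel-verified Lean document; each statement's English description precedes it below -/
import Mathlib

section
/- For every prime number p there exists a first-order sentence φ_p over the vocabulary consisting of one constant symbol a and one ternary relation symbol R with the following property: letting g_p(n) denote the number of interpretations of R on the universe [n] = {1,…,n} that satisfy φ_p when the constant a is interpreted as the fixed element n, one has g_p(n) = 0 for every n that is not a power of p, and g_p(n) ≡ 1 (mod p) whenever n = p^m for some m ∈ ℕ. In particular, n ↦ g_p(n) mod p is not ultimately periodic. -/
/-!
The sentence `hierarchySentence p` says that `z ↦ R z` is a chain of equivalence relations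
("levels") whose bottom level, at `z = a`, is equality, that `R z` is the least level relating `z`
and `a`, and that every class of a level is the union of exactly `p` classes of the level just
below it.

In a finite model the lowest level above equality partitions the universe into blocks of size
`p`, and collapsing it gives a model on the quotient; conversely every model on the quotient
lifts uniquely. So the number of models on `n` points is the sum, over the partitions of `[n]`
into `p`-blocks, of the number of models on `n / p` points. It therefore vanishes unless `n` is a
power of `p`, and at `n = p ^ m` it is `≡ 1 (mod p)` by induction on `m`, because the number of
partitions of a set of size `pk` into `p`-blocks is `≡ 1 (mod p)`: removing the block of a fixed
point gives the recursion `P(pk) = C(pk - 1, p - 1) P(p(k - 1))`, and `C(pk - 1, p - 1) ≡ 1` by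
Lucas' theorem.
-/

open FirstOrder Language

/-- A purely relational language with relation symbols `Rel k` of arity `k`. -/
def relLang (Rel : ℕ → Type) : Language :=
  ⟨fun _ => Empty, Rel⟩

/-- A language with constant symbols indexed by `Fin ℓ`, relation symbols `Rel k`
of arity `k`, and no other non-logical symbols. -/
def cLang (ℓ : ℕ) (Rel : ℕ → Type) : Language :=
  ⟨fun k => match k with | 0 => Fin ℓ | _ + 1 => Empty, Rel⟩

/-- The `relLang Rel`-structure on `M` determined by an interpretation `S`
of the relation symbols. -/
def relLang.mkStructure {Rel : ℕ → Type} {M : Type}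
    (S : ∀ k, Rel k → (Fin k → M) → Prop) : (relLang Rel).Structure M where
  funMap := fun f _ => f.elim
  RelMap := fun {k} r v => S k r v

/-- The `cLang ℓ Rel`-structure on `M` determined by an interpretation `c` of the
constant symbols and an interpretation `S` of the relation symbols. -/
def cLang.mkStructure {ℓ : ℕ} {Rel : ℕ → Type} {M : Type}
    (c : Fin ℓ → M) (S : ∀ k, Rel k → (Fin k → M) → Prop) :
    (cLang ℓ Rel).Structure M where
  funMap := fun {k} f _ =>
    match k, f with
    | 0, i => c i
  RelMap := fun {k} r v => S k r v

/-- `Sp_φ(n)`: the number of interpretations of the relation symbols on `[n]`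
satisfying the sentence `φ` of a relational language. -/
noncomputable def spCount {Rel : ℕ → Type} (φ : (relLang Rel).Sentence) (n : ℕ) : ℕ :=
  Nat.card { S : ∀ k, Rel k → (Fin k → Fin n) → Prop //
    letI := relLang.mkStructure S
    Fin n ⊨ φ }

/-- `f_φ(n)`: the number of interpretations of the relation symbols on `[n + ℓ]`
satisfying `φ`, where the `i`-th (hard-wired) constant is interpreted as `n + i`. -/
noncomputable def fCount (ℓ : ℕ) {Rel : ℕ → Type} (φ : (cLang ℓ Rel).Sentence) (n : ℕ) : ℕ :=
  Nat.card { S : ∀ k, Rel k → (Fin k → Fin (n + ℓ)) → Prop //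
    letI := cLang.mkStructure (fun i => Fin.natAdd n i) S
    Fin (n + ℓ) ⊨ φ }

/-- Relation symbols: `z` nullary, `u` unary, `b` binary, none of higher arity. -/
def rels012 (z u b : ℕ) : ℕ → Type := fun k =>
  match k with
  | 0 => Fin z
  | 1 => Fin u
  | 2 => Fin b
  | _ => Empty

/-- The vocabulary with a single ternary relation symbol (and nothing else). -/
def rels3 : ℕ → Type := fun k =>
  match k with
  | 3 => Fin 1
  | _ => Empty

/-- `g φ n`: the number of interpretations of the single ternary relation symbol on the
universe [n] = Fin n that satisfy φ when the constant symbol is interpreted as the fixed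
element n (the last element of [n]).  (We count pairs of a relation interpretation and a
constant interpretation whose value is pinned to be n, which is the same count.) -/
noncomputable def gCount (φ : (cLang 1 rels3).Sentence) (n : ℕ) : ℕ :=
  Nat.card { p : (∀ k, rels3 k → (Fin k → Fin n) → Prop) × (Fin 1 → Fin n) //
    ((p.2 0 : ℕ) + 1 = n) ∧
    (letI := cLang.mkStructure p.2 p.1
     Fin n ⊨ φ) }

open Function

section Hierarchy

variable {α β : Type*}

def SplitsInto (p : ℕ) (r s : α → α → Prop) (x : α) : Prop :=
  ∃ y : Fin p → α, (∀ i, r x (y i)) ∧ Pairwise (fun i j => ¬ s (y i) (y j)) ∧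
    ∀ u, r x u → ∃ i, s u (y i)

def Covers (R : α → α → α → Prop) (z w : α) : Prop :=
  R w < R z ∧ ∀ v, ¬ (R w < R v ∧ R v < R z)

structure IsHierarchy (p : ℕ) (R : α → α → α → Prop) (a : α) : Prop where
  equivalence : ∀ z, Equivalence (R z)
  total : ∀ z w, R z ≤ R w ∨ R w ≤ R z
  eq_of_rel_bot : ∀ x y, R a x y → x = y
  rel_bot : ∀ z, R z z a
  le_of_rel_bot : ∀ z w, R w z a → R z ≤ R w
  splitsInto : ∀ z w x, Covers R z w → SplitsInto p (R z) (R w) x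

lemma splitsInto_invImage_iff {p : ℕ} {f : α → β} (hf : Surjective f)
    {r s : β → β → Prop} {x : α} :
    SplitsInto p (InvImage r f) (InvImage s f) x ↔ SplitsInto p r s (f x) := by
  constructor
  · rintro ⟨y, hxy, hy, hcover⟩
    refine ⟨f ∘ y, hxy, hy, hf.forall.2 hcover⟩
  · rintro ⟨y, hxy, hy, hcover⟩
    have hfy : ∀ i, f (surjInv hf (y i)) = y i := fun i => surjInv_eq hf _
    refine ⟨surjInv hf ∘ y, fun i => ?_, fun i j hij => ?_, fun u hu => ?_⟩
    · simpa [InvImage, hfy] using hxy i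
    · simpa [InvImage, hfy] using hy hij
    · simpa [InvImage, hfy] using hcover (f u) hu

lemma splitsInto_eq_iff {p : ℕ} [Finite α] {r : α → α → Prop} {x : α} :
    SplitsInto p r (· = ·) x ↔ Nat.card {u // r x u} = p := by
  constructor
  · rintro ⟨y, hxy, hy, hcover⟩
    rw [← Nat.card_fin p]
    refine (Nat.card_eq_of_bijective (fun i => ⟨y i, hxy i⟩) ⟨fun i j hij => ?_, ?_⟩).symm
    · by_contra hne
      exact hy hne (congrArg Subtype.val hij)
    · rintro ⟨u, hu⟩
      obtain ⟨i, rfl⟩ := hcover u hu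
      exact ⟨i, rfl⟩
  · intro hcard
    have e := Finite.equivFinOfCardEq hcard
    refine ⟨fun i => (e.symm i).1, fun i => (e.symm i).2, fun i j hij h => hij ?_,
      fun u hu => ?_⟩
    · exact e.symm.injective (Subtype.ext h)
    · exact ⟨e ⟨u, hu⟩, by simp⟩

lemma Equivalence.of_invImage {f : α → β} (hf : Surjective f) {r : β → β → Prop}
    (h : Equivalence (InvImage r f)) : Equivalence r where
  refl := hf.forall.2 h.refl
  symm {b c} := by
    obtain ⟨x, rfl⟩ := hf b
    obtain ⟨y, rfl⟩ := hf c
    exact h.symm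
  trans {b c d} := by
    obtain ⟨x, rfl⟩ := hf b
    obtain ⟨y, rfl⟩ := hf c
    obtain ⟨z, rfl⟩ := hf d
    exact h.trans

lemma invImage_le_invImage_iff {f : α → β} (hf : Surjective f) {r s : β → β → Prop} :
    InvImage r f ≤ InvImage s f ↔ r ≤ s :=
  ⟨fun h => hf.forall₂.2 fun x y => h x y, fun h x y => h (f x) (f y)⟩

namespace IsHierarchy

variable {p : ℕ} {R : α → α → α → Prop} {a : α}

lemma refl (hR : IsHierarchy p R a) (z x : α) : R z x x := (hR.equivalence z).refl x

lemma rel_bot_iff (hR : IsHierarchy p R a) {x y : α} : R a x y ↔ x = y :=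
  ⟨hR.eq_of_rel_bot x y, fun h => h ▸ hR.refl a x⟩

end IsHierarchy

/-- How a hierarchy on `α` sits over its quotient `f : α → β` by the lowest level above
equality: every level other than the bottom one is pulled back from `β`. -/
structure IsLiftAlong (f : α → β) (a : α) (R : α → α → α → Prop)
    (R' : β → β → β → Prop) : Prop where
  surjective : Surjective f
  eq_invImage : ∀ z, z ≠ a → R z = InvImage (R' (f z)) f
  rel_bot_iff : ∀ x y, R a x y ↔ x = y
  rel_bot_iff' : ∀ c d, R' (f a) c d ↔ c = d
  refl' : ∀ b c, R' b c c
  exists_ne : ∃ z, z ≠ a ∧ f z = f a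

namespace IsLiftAlong

variable {f : α → β} {a : α} {R : α → α → α → Prop} {R' : β → β → β → Prop}

lemma exists_preimage_ne (h : IsLiftAlong f a R R') (b : β) : ∃ z, z ≠ a ∧ f z = b := by
  obtain ⟨z, rfl⟩ := h.surjective b
  rcases eq_or_ne z a with rfl | hz
  · exact h.exists_ne
  · exact ⟨z, hz, rfl⟩

lemma refl (h : IsLiftAlong f a R R') (z x : α) : R z x x := by
  rcases eq_or_ne z a with rfl | hz
  · exact (h.rel_bot_iff x x).2 rfl
  · rw [h.eq_invImage z hz]
    exact h.refl' _ _

lemma bot_le (h : IsLiftAlong f a R R') (w : α) : R a ≤ R w := fun x y hxy =>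
  (h.rel_bot_iff x y).1 hxy ▸ h.refl w x

lemma bot_le' (h : IsLiftAlong f a R R') (c : β) : R' (f a) ≤ R' c := fun x y hxy =>
  (h.rel_bot_iff' x y).1 hxy ▸ h.refl' c x

lemma le_iff (h : IsLiftAlong f a R R') {z w : α} (hz : z ≠ a) (hw : w ≠ a) :
    R z ≤ R w ↔ R' (f z) ≤ R' (f w) := by
  rw [h.eq_invImage z hz, h.eq_invImage w hw, invImage_le_invImage_iff h.surjective]

lemma lt_iff (h : IsLiftAlong f a R R') {z w : α} (hz : z ≠ a) (hw : w ≠ a) :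
    R z < R w ↔ R' (f z) < R' (f w) := by
  simp only [lt_iff_le_not_ge, h.le_iff hz hw, h.le_iff hw hz]

lemma covers_iff (h : IsLiftAlong f a R R') {z w : α} (hz : z ≠ a) (hw : w ≠ a) :
    Covers R z w ↔ Covers R' (f z) (f w) := by
  unfold Covers
  rw [h.lt_iff hw hz, h.surjective.forall]
  refine and_congr_right fun _ => forall_congr' fun v => ?_
  rcases eq_or_ne v a with rfl | hv
  · simp [(h.bot_le w).not_gt, (h.bot_le' (f w)).not_gt]
  · rw [h.lt_iff hw hv, h.lt_iff hv hz]

lemma forall_rel_iff (h : IsLiftAlong f a R R') {x y : α} :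
    (∀ z, z ≠ a → R z x y) ↔ f x = f y := by
  obtain ⟨z₁, hz₁, hfz₁⟩ := h.exists_ne
  refine ⟨fun hxy => ?_, fun hxy z hz => ?_⟩
  · have := hxy z₁ hz₁
    rwa [h.eq_invImage z₁ hz₁, InvImage, hfz₁, h.rel_bot_iff'] at this
  · rw [h.eq_invImage z hz, InvImage, hxy]
    exact h.refl' _ _

lemma rel_eq_ker (h : IsLiftAlong f a R R') {z : α} (hz : z ≠ a) (hfz : f z = f a) :
    R z = InvImage (· = ·) f := by
  rw [h.eq_invImage z hz, hfz]
  exact funext₂ fun c d => propext (h.rel_bot_iff' (f c) (f d))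

lemma rel_bot_eq (h : IsLiftAlong f a R R') : R a = (· = ·) :=
  funext₂ fun x y => propext (h.rel_bot_iff x y)

lemma covers_bot_iff (h : IsLiftAlong f a R R') {z : α} (hz : z ≠ a) :
    Covers R z a ↔ R z = InvImage (· = ·) f := by
  obtain ⟨z₁, hz₁, hfz₁⟩ := h.exists_ne
  have hker : ∀ v, v ≠ a → InvImage (· = ·) f ≤ R v := fun v hv x y hxy =>
    h.forall_rel_iff.2 hxy v hv
  have hbot_lt : R a < InvImage (· = ·) f := by
    refine lt_of_le_not_ge (h.rel_eq_ker hz₁ hfz₁ ▸ h.bot_le z₁) fun hle => hz₁ ?_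
    exact (h.rel_bot_iff _ _).1 (hle z₁ a hfz₁)
  constructor
  · intro hc
    refine le_antisymm (not_not.1 fun hnot => hc.2 z₁ ?_) (hker z hz)
    rw [h.rel_eq_ker hz₁ hfz₁]
    exact ⟨hbot_lt, lt_of_le_not_ge (hker z hz) hnot⟩
  · intro hRz
    refine ⟨hRz ▸ hbot_lt, fun v ⟨hav, hvz⟩ => ?_⟩
    have hv : v ≠ a := by rintro rfl; exact lt_irrefl _ hav
    exact (hRz ▸ hvz).not_ge (hker v hv)

lemma splitsInto_bot_iff [Finite α] {p : ℕ} (h : IsLiftAlong f a R R') {z : α} (hz : z ≠ a)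
    (hc : Covers R z a) (x : α) :
    SplitsInto p (R z) (R a) x ↔ Nat.card {y // f x = f y} = p := by
  rw [(h.covers_bot_iff hz).1 hc, h.rel_bot_eq]
  exact splitsInto_eq_iff

variable {p : ℕ}

theorem isHierarchy_descend (h : IsLiftAlong f a R R') (hR : IsHierarchy p R a) :
    IsHierarchy p R' (f a) := by
  refine ⟨fun b => ?_, fun b c => ?_, fun c d => (h.rel_bot_iff' c d).1, fun b => ?_,
    fun b c => ?_, fun b c d => ?_⟩
  · obtain ⟨z, hz, rfl⟩ := h.exists_preimage_ne b
    exact Equivalence.of_invImage h.surjective (h.eq_invImage z hz ▸ hR.equivalence z)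
  · obtain ⟨z, hz, rfl⟩ := h.exists_preimage_ne b
    obtain ⟨w, hw, rfl⟩ := h.exists_preimage_ne c
    rw [← h.le_iff hz hw, ← h.le_iff hw hz]
    exact hR.total z w
  · obtain ⟨z, hz, rfl⟩ := h.exists_preimage_ne b
    simpa [h.eq_invImage z hz, InvImage] using hR.rel_bot z
  · obtain ⟨z, hz, rfl⟩ := h.exists_preimage_ne b
    obtain ⟨w, hw, rfl⟩ := h.exists_preimage_ne c
    intro hwz
    rw [← h.le_iff hz hw]
    exact hR.le_of_rel_bot z w (by rwa [h.eq_invImage w hw])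
  · obtain ⟨z, hz, rfl⟩ := h.exists_preimage_ne b
    obtain ⟨w, hw, rfl⟩ := h.exists_preimage_ne c
    obtain ⟨x, rfl⟩ := h.surjective d
    intro hc
    have := hR.splitsInto z w x ((h.covers_iff hz hw).2 hc)
    rwa [h.eq_invImage z hz, h.eq_invImage w hw, splitsInto_invImage_iff h.surjective] at this

lemma card_fiber [Finite α] (h : IsLiftAlong f a R R') (hR : IsHierarchy p R a) (x : α) :
    Nat.card {y // f x = f y} = p := by
  obtain ⟨z₁, hz₁, hfz₁⟩ := h.exists_ne
  have hc := (h.covers_bot_iff hz₁).2 (h.rel_eq_ker hz₁ hfz₁)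
  exact (h.splitsInto_bot_iff hz₁ hc x).1 (hR.splitsInto z₁ a x hc)

theorem isHierarchy_lift [Finite α] (h : IsLiftAlong f a R R') (hR' : IsHierarchy p R' (f a))
    (hcard : ∀ x, Nat.card {y // f x = f y} = p) : IsHierarchy p R a := by
  refine ⟨fun z => ?_, fun z w => ?_, fun x y => (h.rel_bot_iff x y).1, fun z => ?_,
    fun z w hwz => ?_, fun z w x hc => ?_⟩
  · rcases eq_or_ne z a with rfl | hz
    · rw [h.rel_bot_eq]
      exact eq_equivalence
    · rw [h.eq_invImage z hz]
      exact InvImage.equivalence _ _ (hR'.equivalence _)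
  · rcases eq_or_ne z a with rfl | hz
    · exact Or.inl (h.bot_le w)
    rcases eq_or_ne w a with rfl | hw
    · exact Or.inr (h.bot_le z)
    rw [h.le_iff hz hw, h.le_iff hw hz]
    exact hR'.total _ _
  · rcases eq_or_ne z a with rfl | hz
    · exact h.refl _ _
    · simpa [h.eq_invImage z hz, InvImage] using hR'.rel_bot (f z)
  · rcases eq_or_ne w a with rfl | hw
    · rw [(h.rel_bot_iff z w).1 hwz]
    rcases eq_or_ne z a with rfl | hz
    · exact h.bot_le w
    rw [h.le_iff hz hw]
    exact hR'.le_of_rel_bot _ _ (by rwa [h.eq_invImage w hw] at hwz)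
  · have hz : z ≠ a := by
      rintro rfl
      exact (h.bot_le w).not_gt hc.1
    rcases eq_or_ne w a with rfl | hw
    · exact (h.splitsInto_bot_iff hz hc x).2 (hcard x)
    · rw [h.eq_invImage z hz, h.eq_invImage w hw, splitsInto_invImage_iff h.surjective]
      exact hR'.splitsInto _ _ _ ((h.covers_iff hz hw).1 hc)

end IsLiftAlong

end Hierarchy

section Descent

variable {α β : Type*} {p : ℕ} {a : α}

def liftAlong (f : α → β) (a : α) (R' : β → β → β → Prop) (z x y : α) : Prop :=
  (z = a ∧ x = y) ∨ (z ≠ a ∧ R' (f z) (f x) (f y))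

def descendAlong (f : α → β) (a : α) (R : α → α → α → Prop) (b c d : β) : Prop :=
  ∃ z x y, z ≠ a ∧ f z = b ∧ f x = c ∧ f y = d ∧ R z x y

namespace IsLiftAlong

variable {f : α → β} {R : α → α → α → Prop} {R' : β → β → β → Prop}

lemma liftAlong_eq (h : IsLiftAlong f a R R') : liftAlong f a R' = R := by
  funext z x y
  rcases eq_or_ne z a with rfl | hz
  · simp [liftAlong, h.rel_bot_iff]
  · simp [liftAlong, hz, h.eq_invImage z hz, InvImage]

lemma descendAlong_eq (h : IsLiftAlong f a R R') : descendAlong f a R = R' := by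
  funext b c d
  obtain ⟨z, hz, rfl⟩ := h.exists_preimage_ne b
  obtain ⟨x, rfl⟩ := h.surjective c
  obtain ⟨y, rfl⟩ := h.surjective d
  refine propext ⟨?_, fun hzxy => ⟨z, x, y, hz, rfl, rfl, rfl, by rwa [h.eq_invImage z hz]⟩⟩
  rintro ⟨z', x', y', hz', hfz, hfx, hfy, hzxy⟩
  rwa [h.eq_invImage z' hz', InvImage, hfz, hfx, hfy] at hzxy

end IsLiftAlong

lemma IsHierarchy.isLiftAlong_liftAlong {f : α → β} (hf : Surjective f)
    {R' : β → β → β → Prop} (hR' : IsHierarchy p R' (f a))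
    (hne : ∃ z, z ≠ a ∧ f z = f a) :
    IsLiftAlong f a (liftAlong f a R') R' where
  surjective := hf
  eq_invImage z hz := funext₂ fun x y => by simp [liftAlong, hz, InvImage]
  rel_bot_iff x y := by simp [liftAlong]
  rel_bot_iff' _ _ := hR'.rel_bot_iff
  refl' := hR'.refl
  exists_ne := hne

namespace IsHierarchy

variable {R : α → α → α → Prop}

lemma exists_rel_iff_forall_rel [Finite α] (hR : IsHierarchy p R a) (hne : ∃ z, z ≠ a) :
    ∃ z₁, z₁ ≠ a ∧ ∀ x y, R z₁ x y ↔ ∀ z, z ≠ a → R z x y := by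
  obtain ⟨z₁, hz₁, hmin⟩ := exists_minimalFor_of_wellFoundedLT (· ≠ a) R hne
  refine ⟨z₁, hz₁, fun x y => ⟨fun hxy z hz => ?_, fun h => h z₁ hz₁⟩⟩
  rcases hR.total z₁ z with hle | hle
  · exact hle x y hxy
  · exact hmin hz hle x y hxy

lemma le_of_rel (hR : IsHierarchy p R a) {z w : α} (hwz : R w z w) : R z ≤ R w :=
  hR.le_of_rel_bot z w ((hR.equivalence w).trans hwz (hR.rel_bot w))

def baseSetoid (hR : IsHierarchy p R a) : Setoid α where
  r x y := ∀ z, z ≠ a → R z x y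
  iseqv := ⟨fun x z _ => hR.refl z x, fun h z hz => (hR.equivalence z).symm (h z hz),
    fun h h' z hz => (hR.equivalence z).trans (h z hz) (h' z hz)⟩

lemma descendAlong_mk_iff (hR : IsHierarchy p R a) {s : Setoid α}
    (hs : ∀ {x y}, s x y ↔ ∀ z, z ≠ a → R z x y) {z : α} (hz : z ≠ a) (x y : α) :
    descendAlong (Quotient.mk s) a R (Quotient.mk s z) (Quotient.mk s x) (Quotient.mk s y) ↔
      R z x y := by
  have hsz {u v : α} (huv : Quotient.mk s u = Quotient.mk s v) : R z u v :=
    hs.1 (Quotient.exact huv) z hz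
  refine ⟨?_, fun hxy => ⟨z, x, y, hz, rfl, rfl, rfl, hxy⟩⟩
  rintro ⟨z', x', y', -, hz', hx, hy, hxy⟩
  have hRz := hR.equivalence z
  exact hRz.trans (hRz.symm (hsz hx)) (hRz.trans (hR.le_of_rel (hsz hz') x' y' hxy) (hsz hy))

lemma exists_rel_bot_of_ne [Finite α] (hR : IsHierarchy p R a) {s : Setoid α}
    (hs : ∀ {x y}, s x y ↔ ∀ z, z ≠ a → R z x y) (hne : ∃ z, z ≠ a) :
    ∃ z₁, z₁ ≠ a ∧ s z₁ a ∧ ∀ x y, R z₁ x y → s x y := by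
  obtain ⟨z₁, hz₁, hz₁_base⟩ := hR.exists_rel_iff_forall_rel hne
  exact ⟨z₁, hz₁, hs.2 ((hz₁_base z₁ a).1 (hR.rel_bot z₁)),
    fun x y h => hs.2 ((hz₁_base x y).1 h)⟩

lemma descendAlong_mk_bot_iff [Finite α] (hR : IsHierarchy p R a) {s : Setoid α}
    (hs : ∀ {x y}, s x y ↔ ∀ z, z ≠ a → R z x y) (hne : ∃ z, z ≠ a) (x y : α) :
    descendAlong (Quotient.mk s) a R (Quotient.mk s a) (Quotient.mk s x) (Quotient.mk s y) ↔
      s x y := by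
  obtain ⟨z₁, hz₁, hz₁a, hz₁s⟩ := hR.exists_rel_bot_of_ne hs hne
  refine ⟨?_, fun hxy =>
    ⟨z₁, x, x, hz₁, Quotient.sound hz₁a, rfl, Quotient.sound hxy, hR.refl z₁ x⟩⟩
  rintro ⟨z, x', y', hz, hza, hx, hy, hxy⟩
  have hle : R z ≤ R z₁ := hR.le_of_rel (hs.1 (Quotient.exact (hza.trans
    (Quotient.sound hz₁a).symm)) z₁ hz₁)
  exact Quotient.exact (hx.symm.trans ((Quotient.sound (hz₁s x' y' (hle x' y' hxy))).trans hy))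

lemma isLiftAlong_descendAlong [Finite α] (hR : IsHierarchy p R a) {s : Setoid α}
    (hs : ∀ {x y}, s x y ↔ ∀ z, z ≠ a → R z x y) (hne : ∃ z, z ≠ a) :
    IsLiftAlong (Quotient.mk s) a R (descendAlong (Quotient.mk s) a R) where
  surjective := Quotient.mk_surjective
  eq_invImage z hz := funext₂ fun x y => propext (hR.descendAlong_mk_iff hs hz x y).symm
  rel_bot_iff _ _ := hR.rel_bot_iff
  rel_bot_iff' c d := by
    induction c, d using Quotient.inductionOn₂ with | _ x y => ?_
    exact (hR.descendAlong_mk_bot_iff hs hne x y).trans Quotient.eq.symm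
  refl' b c := by
    induction b, c using Quotient.inductionOn₂ with | _ z x => ?_
    rcases eq_or_ne z a with rfl | hz
    · exact (hR.descendAlong_mk_bot_iff hs hne x x).2 (s.refl' x)
    · exact (hR.descendAlong_mk_iff hs hz x x).2 (hR.refl z x)
  exists_ne :=
    have ⟨z₁, hz₁, hz₁a, _⟩ := hR.exists_rel_bot_of_ne hs hne
    ⟨z₁, hz₁, Quotient.sound hz₁a⟩

end IsHierarchy

end Descent

section Counting

variable {α β : Type*}

lemma card_modEq_one_of_fibers [Finite α] [Finite β] {p : ℕ} (g : α → β)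
    (hβ : Nat.card β ≡ 1 [MOD p]) (hfib : ∀ b, Nat.card {x // g x = b} ≡ 1 [MOD p]) :
    Nat.card α ≡ 1 [MOD p] := by
  have := Fintype.ofFinite β
  calc Nat.card α = ∑ b, Nat.card {x // g x = b} := by
        rw [← Nat.card_sigma, Nat.card_congr (Equiv.sigmaFiberEquiv g)]
    _ ≡ ∑ _ : β, 1 [MOD p] := Nat.ModEq.sum fun b _ => hfib b
    _ = Nat.card β := by simp
    _ ≡ 1 [MOD p] := hβ

lemma card_eq_card_quotient_mul [Finite α] {p : ℕ} {s : Setoid α}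
    (hs : ∀ x, Nat.card {y // s x y} = p) : Nat.card α = Nat.card (Quotient s) * p := by
  have := Fintype.ofFinite (Quotient s)
  have hfib (q : Quotient s) : Nat.card {x // Quotient.mk s x = q} = p := by
    induction q using Quotient.ind with | _ x => ?_
    rw [← hs x]
    exact Nat.card_congr (Equiv.subtypeEquivRight fun y => Quotient.eq.trans (s.comm' ..))
  rw [← Nat.card_congr (Equiv.sigmaFiberEquiv (Quotient.mk s)), Nat.card_sigma,
    Finset.sum_congr rfl fun q _ => hfib q, Finset.sum_const, smul_eq_mul, Finset.card_univ,
    Nat.card_eq_fintype_card]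

instance [Finite α] : Finite (Setoid α) :=
  Finite.of_injective _ fun _ _ => Setoid.eq_iff_rel_eq.2

abbrev BlockPartition (p : ℕ) (α : Type*) : Type _ :=
  {s : Setoid α // ∀ x, Nat.card {y // s x y} = p}

lemma card_blockPartition_of_isEmpty [IsEmpty α] (p : ℕ) : Nat.card (BlockPartition p α) = 1 :=
  Nat.card_eq_one_iff_unique.2
    ⟨⟨fun _ _ => Subtype.ext (Setoid.ext isEmptyElim)⟩, ⟨⟨⊥, isEmptyElim⟩⟩⟩

section Complement

variable {p : ℕ} {x₀ : α} {c : Set α}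

def Setoid.extendByClass (c : Set α) (s : Setoid ↥cᶜ) : Setoid α where
  r x y := (x ∈ c ∧ y ∈ c) ∨ ∃ (hx : x ∉ c) (hy : y ∉ c), s ⟨x, hx⟩ ⟨y, hy⟩
  iseqv := by
    refine ⟨fun x => ?_, ?_, ?_⟩
    · by_cases hx : x ∈ c
      · exact Or.inl ⟨hx, hx⟩
      · exact Or.inr ⟨hx, hx, s.refl' _⟩
    · rintro x y (⟨hx, hy⟩ | ⟨hx, hy, hxy⟩)
      · exact Or.inl ⟨hy, hx⟩
      · exact Or.inr ⟨hy, hx, s.symm' hxy⟩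
    · rintro x y z (⟨hx, hy⟩ | ⟨hx, hy, hxy⟩) (⟨hy', hz⟩ | ⟨hy', hz, hyz⟩)
      · exact Or.inl ⟨hx, hz⟩
      · exact absurd hy hy'
      · exact absurd hy' hy
      · exact Or.inr ⟨hx, hz, s.trans' hxy hyz⟩

@[simp]
lemma Setoid.extendByClass_apply {s : Setoid ↥cᶜ} {x y : α} :
    Setoid.extendByClass c s x y ↔
      (x ∈ c ∧ y ∈ c) ∨ ∃ (hx : x ∉ c) (hy : y ∉ c), s ⟨x, hx⟩ ⟨y, hy⟩ :=
  Iff.rfl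

def blockPartitionComplEquiv (hx₀ : x₀ ∈ c) (hc : Nat.card c = p) :
    {s : BlockPartition p α // ∀ y, s.1 x₀ y ↔ y ∈ c} ≃ BlockPartition p ↥cᶜ where
  toFun s := ⟨s.1.1.comap Subtype.val, fun u => by
    have hclass (y : α) : s.1.1 u y → y ∉ c := fun huy hy =>
      u.2 ((s.2 u).1 (s.1.1.trans' ((s.2 y).2 hy) (s.1.1.symm' huy)))
    refine (Nat.card_congr ?_).trans (s.1.2 u)
    exact (Equiv.subtypeSubtypeEquivSubtypeInter (· ∈ cᶜ) (s.1.1 u ·)).trans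
      (Equiv.subtypeEquivRight fun y => and_iff_right_of_imp (hclass y))⟩
  invFun s := ⟨⟨Setoid.extendByClass c s.1, fun x => by
    by_cases hx : x ∈ c
    · exact (Nat.card_congr (Equiv.subtypeEquivRight fun y => by simp [hx])).trans hc
    · refine (Nat.card_congr ((Equiv.subtypeEquivRight fun y => ?_).trans
        (Equiv.subtypeSubtypeEquivSubtypeExists (· ∈ cᶜ) (s.1 ⟨x, hx⟩ ·)).symm)).trans
        (s.2 ⟨x, hx⟩)
      simp [hx]⟩, fun y => by simp [hx₀]⟩
  left_inv s := by
    refine Subtype.ext (Subtype.ext (Setoid.ext fun x y => ?_))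
    simp only [Setoid.extendByClass_apply, Setoid.comap_rel, ← s.2]
    constructor
    · rintro (⟨hx, hy⟩ | ⟨-, -, hxy⟩)
      · exact s.1.1.trans' (s.1.1.symm' hx) hy
      · exact hxy
    · intro hxy
      by_cases hx : s.1.1 x₀ x
      · exact Or.inl ⟨hx, s.1.1.trans' hx hxy⟩
      · exact Or.inr ⟨hx, fun hy => hx (s.1.1.trans' hy (s.1.1.symm' hxy)), hxy⟩
  right_inv s := by
    refine Subtype.ext (Setoid.ext fun u v => ?_)
    have hu : (u : α) ∉ c := u.2
    have hv : (v : α) ∉ c := v.2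
    simp [Setoid.comap_rel, hu, hv]

end Complement

lemma card_finsets_containing [Fintype α] [DecidableEq α] (x₀ : α) (k : ℕ) :
    Nat.card {c : Finset α // x₀ ∈ c ∧ c.card = k + 1} = (Fintype.card α - 1).choose k := by
  let e : {c : Finset α // x₀ ∈ c ∧ c.card = k + 1} ≃
      {t // t ∈ (Finset.univ.erase x₀).powersetCard k} :=
    { toFun c := ⟨c.1.erase x₀, Finset.mem_powersetCard.2
        ⟨Finset.erase_subset_erase _ (Finset.subset_univ _), by simp [c.2.1, c.2.2]⟩⟩
      invFun t := ⟨insert x₀ t.1, Finset.mem_insert_self _ _, by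
        have ht := Finset.mem_powersetCard.1 t.2
        rw [Finset.card_insert_of_notMem fun hx => by simpa using ht.1 hx, ht.2]⟩
      left_inv c := Subtype.ext (Finset.insert_erase c.2.1)
      right_inv t := Subtype.ext (Finset.erase_insert fun hx => by
        simpa using (Finset.mem_powersetCard.1 t.2).1 hx) }
  rw [Nat.card_congr e, Nat.card_eq_fintype_card, Fintype.card_coe, Finset.card_powersetCard,
    Finset.card_erase_of_mem (Finset.mem_univ _), Finset.card_univ]

lemma choose_pred_modEq_one {p : ℕ} (hp : p.Prime) (k : ℕ) :
    (p * (k + 1) - 1).choose (p - 1) ≡ 1 [MOD p] := by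
  have := Fact.mk hp
  have hp1 := hp.one_le
  have hn : p * (k + 1) - 1 = p * k + (p - 1) := by rw [Nat.mul_succ]; omega
  have hlt : p - 1 < p := by omega
  have := Choose.choose_modEq_choose_mod_mul_choose_div_nat (p := p) (n := p * (k + 1) - 1)
    (k := p - 1)
  simpa [hn, Nat.mul_add_mod, Nat.mul_add_div hp.pos, Nat.mod_eq_of_lt hlt,
    Nat.div_eq_of_lt hlt] using this

theorem card_blockPartition_modEq_one [Finite α] {p k : ℕ} (hp : p.Prime)
    (hα : Nat.card α = p * k) : Nat.card (BlockPartition p α) ≡ 1 [MOD p] := by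
  induction k generalizing α with
  | zero =>
    have := Finite.card_eq_zero_iff.1 (by simpa using hα)
    rw [card_blockPartition_of_isEmpty]
  | succ k ih =>
    classical
    have := Fintype.ofFinite α
    obtain ⟨x₀⟩ : Nonempty α :=
      (Nat.card_pos_iff.1 (by rw [hα]; exact Nat.mul_pos hp.pos k.succ_pos)).1
    let classOf (s : BlockPartition p α) : {c : Finset α // x₀ ∈ c ∧ c.card = p} :=
      ⟨Finset.univ.filter (s.1 x₀ ·), by simp,
        (Fintype.card_subtype _).symm.trans (Nat.card_eq_fintype_card.symm.trans (s.2 x₀))⟩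
    refine card_modEq_one_of_fibers classOf ?_ fun c => ?_
    · obtain ⟨q, hq⟩ : ∃ q, p = q + 1 := ⟨p - 1, by have := hp.one_le; omega⟩
      rw [hq, card_finsets_containing, ← Nat.card_eq_fintype_card, hα, ← hq]
      simpa [hq] using choose_pred_modEq_one hp k
    · have hcard : Nat.card ↥(c.1 : Set α) = p := by simp [c.2.2]
      have e : {s // classOf s = c} ≃
          {s : BlockPartition p α // ∀ y, s.1 x₀ y ↔ y ∈ (c.1 : Set α)} :=
        Equiv.subtypeEquivRight fun s => by simp [classOf, Subtype.ext_iff, Finset.ext_iff]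
      rw [Nat.card_congr (e.trans (blockPartitionComplEquiv (by simpa using c.2.1) hcard))]
      refine ih ?_
      have := Set.ncard_add_ncard_compl (c.1 : Set α)
      rw [← Nat.card_coe_set_eq, hcard] at this
      rw [Nat.card_coe_set_eq, Nat.mul_succ] at *
      omega

end Counting

section HierarchyCount

variable {α : Type*} {p : ℕ} {R : α → α → α → Prop} {a : α}

lemma card_hierarchy_of_subsingleton [Subsingleton α] (a : α) :
    Nat.card {R : α → α → α → Prop // IsHierarchy p R a} = 1 := by
  refine Nat.card_eq_one_iff_unique.2
    ⟨⟨fun R S => Subtype.ext ?_⟩, ⟨⟨fun _ _ _ => True, ?_⟩⟩⟩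
  · funext z x y
    rw [Subsingleton.elim x y]
    exact propext ⟨fun _ => S.2.refl z y, fun _ => R.2.refl z y⟩
  · exact ⟨fun _ => ⟨fun _ => trivial, fun _ => trivial, fun _ _ => trivial⟩,
      fun _ _ => Or.inl le_rfl, fun x y _ => Subsingleton.elim x y, fun _ => trivial,
      fun _ _ _ => le_rfl, fun _ _ _ hc => (lt_irrefl _ hc.1).elim⟩

lemma exists_ne_rel_of_card {s : Setoid α} {x : α} (hs : Nat.card {y // s x y} = p)
    (hp : 2 ≤ p) :
    ∃ z, z ≠ x ∧ s z x := by
  have : Finite {y // s x y} := Nat.finite_of_card_ne_zero (by omega)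
  have : Nontrivial {y // s x y} := Finite.one_lt_card_iff_nontrivial.1 (by omega)
  obtain ⟨⟨z, hz⟩, hne⟩ := exists_ne (⟨x, s.refl' x⟩ : {y // s x y})
  exact ⟨z, fun h => hne (Subtype.ext h), s.symm' hz⟩

lemma card_mk_eq_mk (s : Setoid α) (x : α) :
    Nat.card {y // Quotient.mk s x = Quotient.mk s y} = Nat.card {y // s x y} :=
  Nat.card_congr (Equiv.subtypeEquivRight fun _ => Quotient.eq)

namespace IsHierarchy

def toBlockPartition [Finite α] (hR : IsHierarchy p R a) (hne : ∃ z, z ≠ a) :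
    BlockPartition p α :=
  ⟨hR.baseSetoid, fun x => (card_mk_eq_mk _ x).symm.trans
    ((hR.isLiftAlong_descendAlong Iff.rfl hne).card_fiber hR x)⟩

end IsHierarchy

def hierarchyFiberEquiv [Finite α] (hp : 2 ≤ p) (hne : ∃ z, z ≠ a)
    (s : BlockPartition p α) :
    {R : {R // IsHierarchy p R a} // R.2.toBlockPartition hne = s} ≃
      {R' : Quotient s.1 → Quotient s.1 → Quotient s.1 → Prop //
        IsHierarchy p R' (Quotient.mk s.1 a)} :=
  have hlift (R : {R : {R // IsHierarchy p R a} // R.2.toBlockPartition hne = s}) :=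
    R.1.2.isLiftAlong_descendAlong (s := s.1)
      (fun {x y} => (Setoid.ext_iff.1 (congrArg Subtype.val R.2) x y).symm) hne
  have hlift' (R' : {R' : Quotient s.1 → Quotient s.1 → Quotient s.1 → Prop //
      IsHierarchy p R' (Quotient.mk s.1 a)}) :=
    R'.2.isLiftAlong_liftAlong Quotient.mk_surjective
      (by obtain ⟨z, hz, hza⟩ := exists_ne_rel_of_card (s.2 a) hp
          exact ⟨z, hz, Quotient.sound hza⟩)
  { toFun R := ⟨descendAlong (Quotient.mk s.1) a R.1.1, (hlift R).isHierarchy_descend R.1.2⟩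
    invFun R' := ⟨⟨liftAlong (Quotient.mk s.1) a R'.1,
      (hlift' R').isHierarchy_lift R'.2 fun x => (card_mk_eq_mk _ x).trans (s.2 x)⟩,
      Subtype.ext (Setoid.ext fun _ _ => (hlift' R').forall_rel_iff.trans Quotient.eq)⟩
    left_inv R := Subtype.ext (Subtype.ext (hlift R).liftAlong_eq)
    right_inv R' := Subtype.ext (hlift' R').descendAlong_eq }

theorem card_hierarchy_modEq_one [Finite α] (hp : p.Prime) (a : α) {m : ℕ}
    (hα : Nat.card α = p ^ m) :
    Nat.card {R : α → α → α → Prop // IsHierarchy p R a} ≡ 1 [MOD p] := by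
  induction m generalizing α with
  | zero =>
    have := (Nat.card_eq_one_iff_unique.1 (by simpa using hα)).1
    rw [card_hierarchy_of_subsingleton]
  | succ m ih =>
    have : Nontrivial α := Finite.one_lt_card_iff_nontrivial.1
      (by rw [hα]; exact Nat.one_lt_pow m.succ_ne_zero hp.one_lt)
    have hne : ∃ z, z ≠ a := exists_ne a
    refine card_modEq_one_of_fibers (fun R => R.2.toBlockPartition hne)
      (card_blockPartition_modEq_one hp (by rw [hα, pow_succ, mul_comm])) fun s => ?_
    rw [Nat.card_congr (hierarchyFiberEquiv hp.two_le hne s)]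
    refine ih _ (Nat.eq_of_mul_eq_mul_right hp.pos ?_)
    rw [← card_eq_card_quotient_mul s.2, hα, pow_succ]

theorem IsHierarchy.exists_card_eq_pow [Finite α] (hR : IsHierarchy p R a) (hp : 2 ≤ p) :
    ∃ m, Nat.card α = p ^ m := by
  induction hn : Nat.card α using Nat.strong_induction_on generalizing α with
  | _ n ih =>
  have : Nonempty α := ⟨a⟩
  rcases subsingleton_or_nontrivial α with hα | hα
  · exact ⟨0, by rw [← hn, pow_zero, Nat.card_unique]⟩
  have hne : ∃ z, z ≠ a := exists_ne a
  set s := hR.toBlockPartition hne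
  have hR' := (hR.isLiftAlong_descendAlong (s := s.1) Iff.rfl hne).isHierarchy_descend hR
  have hcard := card_eq_card_quotient_mul s.2
  have : Nonempty (Quotient s.1) := ⟨Quotient.mk _ a⟩
  have : 0 < Nat.card (Quotient s.1) := Nat.card_pos
  obtain ⟨m, hm⟩ := ih _ (by rw [← hn, hcard]; nlinarith) hR' rfl
  exact ⟨m + 1, by rw [← hn, hcard, hm, pow_succ]⟩

end HierarchyCount

section Sentence

abbrev L₃ : Language := cLang 1 rels3

def relSymbol : L₃.Relations 3 := (0 : Fin 1)

def constSymbol : L₃.Constants := (0 : Fin 1)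

variable {M : Type*} [L₃.Structure M] {V : Type*} {k : ℕ}

def relOf (M : Type*) [L₃.Structure M] (z x y : M) : Prop :=
  Structure.RelMap relSymbol ![z, x, y]

def rel3 (t₁ t₂ t₃ : L₃.Term V) : L₃.Formula V := relSymbol.formula ![t₁, t₂, t₃]

def newVar (i : Fin k) : L₃.Term (V ⊕ Fin k) := Term.var (Sum.inr i)

def liftTerm (t : L₃.Term V) : L₃.Term (V ⊕ Fin k) := t.relabel Sum.inl

@[simp]
lemma realize_rel3 {v : V → M} {t₁ t₂ t₃ : L₃.Term V} :
    (rel3 t₁ t₂ t₃).Realize v ↔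
      relOf M (t₁.realize v) (t₂.realize v) (t₃.realize v) := by
  simp only [rel3, Formula.realize_rel, relOf]
  exact Iff.of_eq (congrArg _ (funext fun i => by fin_cases i <;> rfl))

@[simp]
lemma realize_newVar (i : Fin k) {v : V ⊕ Fin k → M} :
    (newVar i : L₃.Term _).realize v = v (Sum.inr i) :=
  rfl

@[simp]
lemma realize_liftTerm (t : L₃.Term V) {v : V → M} {w : Fin k → M} :
    (liftTerm t : L₃.Term (V ⊕ Fin k)).realize (Sum.elim v w) = t.realize v := by
  simp [liftTerm, Sum.elim_comp_inl]

noncomputable def refinesFormula (z w : L₃.Term V) : L₃.Formula V :=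
  Formula.iAlls (Fin 2) ((rel3 (liftTerm z) (newVar 0) (newVar 1)).imp
    (rel3 (liftTerm w) (newVar 0) (newVar 1)))

@[simp]
lemma realize_refinesFormula {v : V → M} {z w : L₃.Term V} :
    (refinesFormula z w).Realize v ↔ relOf M (z.realize v) ≤ relOf M (w.realize v) := by
  simp [refinesFormula, Pi.le_def, ← FinVec.forall_iff, FinVec.Forall]

noncomputable def ltFormula (z w : L₃.Term V) : L₃.Formula V :=
  refinesFormula z w ⊓ ∼(refinesFormula w z)

@[simp]
lemma realize_ltFormula {v : V → M} {z w : L₃.Term V} :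
    (ltFormula z w).Realize v ↔ relOf M (z.realize v) < relOf M (w.realize v) := by
  simp [ltFormula, lt_iff_le_not_ge]

noncomputable def coversFormula (z w : L₃.Term V) : L₃.Formula V :=
  ltFormula w z ⊓ Formula.iAlls (Fin 1)
    ∼(ltFormula (liftTerm w) (newVar 0) ⊓ ltFormula (newVar 0) (liftTerm z))

@[simp]
lemma realize_coversFormula {v : V → M} {z w : L₃.Term V} :
    (coversFormula z w).Realize v ↔ Covers (relOf M) (z.realize v) (w.realize v) := by
  simp [coversFormula, Covers, ← FinVec.forall_iff, FinVec.Forall]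

noncomputable def splitsIntoFormula (p : ℕ) (z w x : L₃.Term V) : L₃.Formula V :=
  Formula.iExs (Fin p)
    (Formula.iInf (fun i => rel3 (liftTerm z) (liftTerm x) (newVar i)) ⊓
      Formula.iInf (fun ij : {ij : Fin p × Fin p // ij.1 ≠ ij.2} =>
        ∼(rel3 (liftTerm w) (newVar ij.1.1) (newVar ij.1.2))) ⊓
      Formula.iAlls (Fin 1) ((rel3 (liftTerm (liftTerm z)) (liftTerm (liftTerm x)) (newVar 0)).imp
        (Formula.iSup fun i => rel3 (liftTerm (liftTerm w)) (newVar 0) (liftTerm (newVar i)))))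

@[simp]
lemma realize_splitsIntoFormula {p : ℕ} {v : V → M} {z w x : L₃.Term V} :
    (splitsIntoFormula p z w x).Realize v ↔
      SplitsInto p (relOf M (z.realize v)) (relOf M (w.realize v)) (x.realize v) := by
  simp [splitsIntoFormula, SplitsInto, ← FinVec.forall_iff, FinVec.Forall, Pairwise, and_assoc]

noncomputable def equivalenceFormula (z : L₃.Term V) : L₃.Formula V :=
  Formula.iAlls (Fin 3) (rel3 (liftTerm z) (newVar 0) (newVar 0) ⊓
    ((rel3 (liftTerm z) (newVar 0) (newVar 1)).imp (rel3 (liftTerm z) (newVar 1) (newVar 0))) ⊓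
    ((rel3 (liftTerm z) (newVar 0) (newVar 1)).imp
      ((rel3 (liftTerm z) (newVar 1) (newVar 2)).imp (rel3 (liftTerm z) (newVar 0) (newVar 2)))))

@[simp]
lemma realize_equivalenceFormula {v : V → M} {z : L₃.Term V} :
    (equivalenceFormula z).Realize v ↔ Equivalence (relOf M (z.realize v)) := by
  simp only [equivalenceFormula, Formula.realize_iAlls, Formula.realize_inf, Formula.realize_imp,
    realize_rel3, realize_liftTerm, realize_newVar, Sum.elim_inr]
  exact ⟨fun h => ⟨fun x => (h ![x, x, x]).1.1, fun {x y} hxy => (h ![x, y, x]).1.2 hxy,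
    fun {x y u} hxy hyu => (h ![x, y, u]).2 hxy hyu⟩,
    fun h _ => ⟨⟨h.refl _, h.symm⟩, h.trans⟩⟩

def constTerm : L₃.Term V := Constants.term constSymbol

@[simp]
lemma realize_constTerm {v : V → M} : (constTerm : L₃.Term V).realize v = (constSymbol : M) :=
  Term.realize_constants

noncomputable def hierarchySentence (p : ℕ) : L₃.Sentence :=
  Formula.iAlls (Fin 1) (equivalenceFormula (newVar 0)) ⊓
    Formula.iAlls (Fin 2)
      (refinesFormula (newVar 0) (newVar 1) ⊔ refinesFormula (newVar 1) (newVar 0)) ⊓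
    Formula.iAlls (Fin 2) ((rel3 constTerm (newVar 0) (newVar 1)).imp
      ((newVar 0).equal (newVar 1))) ⊓
    Formula.iAlls (Fin 1) (rel3 (newVar 0) (newVar 0) constTerm) ⊓
    Formula.iAlls (Fin 2) ((rel3 (newVar 1) (newVar 0) constTerm).imp
      (refinesFormula (newVar 0) (newVar 1))) ⊓
    Formula.iAlls (Fin 3) ((coversFormula (newVar 0) (newVar 1)).imp
      (splitsIntoFormula p (newVar 0) (newVar 1) (newVar 2)))

theorem realize_hierarchySentence {p : ℕ} :
    M ⊨ hierarchySentence p ↔ IsHierarchy p (relOf M) (constSymbol : M) := by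
  simp only [hierarchySentence, Sentence.Realize, Formula.realize_inf, Formula.realize_iAlls,
    Formula.realize_sup, Formula.realize_imp, Formula.realize_equal, realize_equivalenceFormula,
    realize_refinesFormula, realize_rel3, realize_coversFormula, realize_splitsIntoFormula,
    realize_newVar, realize_constTerm, Sum.elim_inr, ← FinVec.forall_iff, FinVec.Forall]
  constructor
  · rintro ⟨⟨⟨⟨⟨h₁, h₂⟩, h₃⟩, h₄⟩, h₅⟩, h₆⟩
    exact ⟨h₁, h₂, h₃, h₄, h₅, h₆⟩
  · rintro ⟨h₁, h₂, h₃, h₄, h₅, h₆⟩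
    exact ⟨⟨⟨⟨⟨h₁, h₂⟩, h₃⟩, h₄⟩, h₅⟩, h₆⟩

end Sentence

def rels3Equiv (M : Type*) :
    (∀ k, rels3 k → (Fin k → M) → Prop) ≃ (M → M → M → Prop) where
  toFun S z x y := S 3 relSymbol ![z, x, y]
  invFun R
    | 3, _, v => R (v 0) (v 1) (v 2)
    | 0, r, _ | 1, r, _ | 2, r, _ | _ + 4, r, _ => r.elim
  left_inv S := by
    funext k r v
    match k, r with
    | 3, r =>
      rw [Subsingleton.elim (α := Fin 1) r relSymbol]
      exact congrArg (S 3 relSymbol) (funext fun i => by fin_cases i <;> rfl)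
    | 0, r | 1, r | 2, r | _ + 4, r => exact r.elim
  right_inv _ := rfl

lemma realize_hierarchySentence_mkStructure {p : ℕ} {M : Type} (c : Fin 1 → M)
    (S : ∀ k, rels3 k → (Fin k → M) → Prop) :
    (letI := cLang.mkStructure c S; M ⊨ hierarchySentence p) ↔
      IsHierarchy p (rels3Equiv M S) (c 0) :=
  letI := cLang.mkStructure c S
  realize_hierarchySentence

lemma gCount_eq_card_hierarchy (p n : ℕ) :
    gCount (hierarchySentence p) (n + 1) =
      Nat.card {R : Fin (n + 1) → Fin (n + 1) → Fin (n + 1) → Prop //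
        IsHierarchy p R (Fin.last n)} := by
  have hlast {c : Fin 1 → Fin (n + 1)} (hc : (c 0 : ℕ) + 1 = n + 1) : c 0 = Fin.last n :=
    Fin.ext (by rw [Fin.val_last]; omega)
  refine Nat.card_congr
    { toFun S := ⟨rels3Equiv _ S.1.1,
        hlast S.2.1 ▸ (realize_hierarchySentence_mkStructure S.1.2 S.1.1).1 S.2.2⟩
      invFun R := ⟨((rels3Equiv _).symm R.1, fun _ => Fin.last n), by simp,
        (realize_hierarchySentence_mkStructure _ _).2 (by simpa using R.2)⟩
      left_inv S := Subtype.ext (Prod.ext ((rels3Equiv _).symm_apply_apply _)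
        (funext fun i => by rw [Subsingleton.elim i 0, hlast S.2.1]))
      right_inv R := Subtype.ext ((rels3Equiv _).apply_symm_apply _) }

lemma not_exists_pow_eq_of_lt {p k n : ℕ} (hp : 1 < p) (h₁ : p ^ k < n)
    (h₂ : n < p ^ (k + 1)) :
    ¬ ∃ m, n = p ^ m := by
  rintro ⟨m, rfl⟩
  rw [Nat.pow_lt_pow_iff_right hp] at h₁ h₂
  omega

lemma not_eventually_periodic_of_pow {p : ℕ} (hp : 2 ≤ p) {g : ℕ → ℕ}
    (hzero : ∀ n, (¬ ∃ m, n = p ^ m) → g n = 0) (hone : ∀ m, g (p ^ m) ≡ 1 [MOD p]) :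
    ¬ ∃ r q : ℕ, 1 ≤ q ∧ ∀ n, r ≤ n → g (n + q) ≡ g n [MOD p] := by
  rintro ⟨r, q, hq, hper⟩
  set N := r + q
  have hN : N < p ^ N := Nat.lt_pow_self hp
  have hgap : p ^ N + q < p ^ (N + 1) := by
    have := Nat.mul_le_mul_left (p ^ N) hp
    rw [pow_succ]
    omega
  have h := (hper (p ^ N) (by omega)).trans (hone N)
  rw [hzero _ (not_exists_pow_eq_of_lt hp (by omega) hgap)] at h
  have := Nat.le_of_dvd one_pos (Nat.modEq_zero_iff_dvd.1 h.symm)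
  omega

lemma gCount_hierarchySentence_eq_zero {p n : ℕ} (hp : 2 ≤ p) (hn : ¬ ∃ m, n = p ^ m) :
    gCount (hierarchySentence p) n = 0 := by
  cases n with
  | zero => exact Nat.card_eq_zero.2 (Or.inl ⟨fun S => (S.1.2 0).elim0⟩)
  | succ n =>
    rw [gCount_eq_card_hierarchy]
    exact Nat.card_eq_zero.2 (Or.inl ⟨fun R =>
      hn (by simpa using R.2.exists_card_eq_pow hp)⟩)

lemma gCount_hierarchySentence_pow_modEq_one {p : ℕ} (hp : p.Prime) (m : ℕ) :
    gCount (hierarchySentence p) (p ^ m) ≡ 1 [MOD p] := by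
  obtain ⟨n, hn⟩ := Nat.exists_eq_succ_of_ne_zero (pow_ne_zero m hp.ne_zero)
  rw [hn, gCount_eq_card_hierarchy]
  exact card_hierarchy_modEq_one hp _ (by rw [Nat.card_fin, hn])

/-- **Ternary relation counterexample for every prime p.**
For every prime p there is a first-order sentence φ_p over the vocabulary with one
constant symbol and one ternary relation symbol such that g_p(n) = 0 whenever n is not
a power of p, and g_p(n) ≡ 1 (mod p) whenever n = p^m.  In particular n ↦ g_p(n) mod p
is not ultimately periodic. -/
theorem ternary_counterexample_with_constant_prime (p : ℕ) (hp : p.Prime) :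
    ∃ φ : (cLang 1 rels3).Sentence,
      (∀ n : ℕ, (¬ ∃ m : ℕ, n = p ^ m) → gCount φ n = 0) ∧
      (∀ m : ℕ, gCount φ (p ^ m) ≡ 1 [MOD p]) ∧
      (¬ ∃ r q : ℕ, 1 ≤ q ∧ ∀ n : ℕ, r ≤ n → gCount φ (n + q) ≡ gCount φ n [MOD p]) :=
  have hzero n := gCount_hierarchySentence_eq_zero (n := n) hp.two_le
  have hone := gCount_hierarchySentence_pow_modEq_one hp
  ⟨hierarchySentence p, hzero, hone, not_eventually_periodic_of_pow hp.two_le hzero hone⟩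
end

section
/- There exists a first-order sentence φ over the vocabulary consisting of a single quaternary (arity-4) relation symbol such that the sequence Sp_φ(n) is not MC-finite. -/
open FirstOrder Language

/-- A sequence is MC-finite iff for every m ≥ 2 it is ultimately periodic modulo m. -/
def MCFinite (s : ℕ → ℕ) : Prop :=
  ∀ m : ℕ, 2 ≤ m → ∃ r p : ℕ, 1 ≤ p ∧ ∀ n : ℕ, r ≤ n → s (n + p) ≡ s n [MOD m]

/-- The vocabulary with a single quaternary relation symbol (and nothing else). -/
def rels4 : ℕ → Type := fun k =>
  match k with
  | 4 => Fin 1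
  | _ => Empty


/-! The sentence `φ` says that the quaternary relation is a dyadic hierarchy: the order in which
pairs of leaves separate in a complete binary tree whose leaves are the points of the universe.
The sibling map of a dyadic hierarchy is a fixed-point-free involution, so an odd universe with at
least three points carries none. On `α × Bool`, swapping the two points of one fibre `{a} × Bool`
acts on hierarchies as an involution; doing this fibre after fibre shows that the number of
hierarchies is congruent mod 2 to the number of those invariant under all swaps, and these are
exactly the hierarchies of `α` with the fibres added as a new bottom level. Hence `Sp_φ(n)` is odd
iff `n` is a power of two, a pattern that is not ultimately periodic. -/

open Function in
theorem Function.Involutive.card_modEq_card_fixedPoints {α : Type*} [Finite α] {f : α → α}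
    (hf : Involutive f) : Nat.card α ≡ Nat.card (fixedPoints f) [MOD 2] := by
  classical
  cases nonempty_fintype α
  let g : Function.End α := f
  have hg : g ^ 2 ^ 1 = 1 := funext hf
  rw [Nat.card_eq_fintype_card, Nat.card_eq_fintype_card]
  exact Equiv.Perm.card_fixedPoints_modEq hg

theorem Function.Involutive.card_subtype_modEq {X : Type*} [Finite X] {σ : X → X}
    (hσ : Function.Involutive σ) {P : X → Prop} (hP : ∀ x, P x → P (σ x)) :
    Nat.card {x // P x} ≡ Nat.card {x // P x ∧ σ x = x} [MOD 2] := by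
  let τ : {x // P x} → {x // P x} := fun x => ⟨σ x, hP x x.2⟩
  have hτ : Function.Involutive τ := fun x => Subtype.ext (hσ x)
  have fixed_equiv : Function.fixedPoints τ ≃ {x // P x ∧ σ x = x} :=
    { toFun := fun x => ⟨x.1.1, x.1.2, congrArg Subtype.val x.2⟩
      invFun := fun x => ⟨⟨x.1, x.2.1⟩, Subtype.ext x.2.2⟩ }
  simpa only [Nat.card_congr fixed_equiv] using hτ.card_modEq_card_fixedPoints

theorem Nat.isPowerOfTwo_two_mul_iff {k : ℕ} : (2 * k).isPowerOfTwo ↔ k.isPowerOfTwo := by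
  constructor
  · rintro ⟨_ | d, hd⟩
    · omega
    · exact ⟨d, by rw [pow_succ] at hd; omega⟩
  · rintro ⟨d, rfl⟩
    exact ⟨d + 1, by rw [pow_succ, mul_comm]⟩

theorem Nat.not_isPowerOfTwo_of_odd {n : ℕ} (hn : Odd n) (h1 : n ≠ 1) : ¬ n.isPowerOfTwo := by
  rintro ⟨_ | d, rfl⟩
  · exact h1 rfl
  · exact Nat.not_even_iff_odd.mpr hn ⟨2 ^ d, by rw [pow_succ]; omega⟩

theorem Prod.eq_mk_not_of_fst_eq {α : Type*} {x y : α × Bool} (hxy : x ≠ y) (h : x.1 = y.1) :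
    y = (x.1, !x.2) := by
  obtain ⟨a, b⟩ := x; obtain ⟨c, d⟩ := y
  cases b <;> cases d <;> simp_all

/-- `D x y z w` reads "`x, y` separate no higher than `z, w`" in a complete binary tree whose
leaves are the points of `α`. -/
structure IsDyadicHierarchy {α : Type*} (D : α → α → α → α → Prop) : Prop where
  total : ∀ x y z w, D x y z w ∨ D z w x y
  trans : ∀ x y z w u v, D x y z w → D z w u v → D x y u v
  swap : ∀ x y z w, D x y z w → D y x z w
  diag : ∀ x z w, D x x z w
  eq_of_le_diag : ∀ x z w, D z w x x → z = w
  ultra : ∀ u v x y z, D x y u v → D y z u v → D x z u v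
  binary : ∀ u v x y z, u ≠ v → D x y u v → D x z u v →
    ¬ D u v x y ∨ ¬ D u v x z ∨ (D y z u v ∧ ¬ D u v y z)
  balanced : ∀ u v x, u ≠ v → ∃ y, D x y u v ∧ D u v x y

def DyadicHierarchy (α : Type*) : Type _ :=
  {D : α → α → α → α → Prop // IsDyadicHierarchy D}

namespace DyadicHierarchy

variable {α β : Type*}

def relComap (f : β → α) (D : α → α → α → α → Prop) : β → β → β → β → Prop :=
  fun x y z w => D (f x) (f y) (f z) (f w)

theorem relComap_eq_self_iff {σ : β → β} {D : β → β → β → β → Prop} :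
    relComap σ D = D ↔ ∀ x y z w, D (σ x) (σ y) (σ z) (σ w) ↔ D x y z w := by
  simp only [funext_iff, relComap, eq_iff_iff]

theorem relComap_involutive {σ : β → β} (hσ : σ.Involutive) :
    (relComap σ : (β → β → β → β → Prop) → _).Involutive := fun D => by
  funext x y z w; simp only [relComap, hσ _]

def IsSibling (D : α → α → α → α → Prop) (x y : α) : Prop :=
  x ≠ y ∧ ∀ z w, z ≠ w → D x y z w

theorem IsSibling.of_involutive_invariant {D : α → α → α → α → Prop} {σ : α → α}
    (hσ : σ.Involutive) (hD : ∀ x y z w, D (σ x) (σ y) (σ z) (σ w) ↔ D x y z w) {x y : α}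
    (hxy : IsSibling D x y) : IsSibling D (σ x) (σ y) := by
  refine ⟨hσ.injective.ne hxy.1, fun z w hzw => ?_⟩
  simpa only [hσ _] using (hD x y (σ z) (σ w)).mpr (hxy.2 _ _ (hσ.injective.ne hzw))

/-- Each point `a` becomes the pair of leaves `{a} × Bool`, separating below every other pair. -/
def doubled (D : α → α → α → α → Prop) : α × Bool → α × Bool → α × Bool → α × Bool → Prop :=
  fun x y z w => x = y ∨ (z ≠ w ∧ (x.1 = y.1 ∨ (z.1 ≠ w.1 ∧ D x.1 y.1 z.1 w.1)))

end DyadicHierarchy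

namespace IsDyadicHierarchy

open DyadicHierarchy

variable {α β : Type*} {D : α → α → α → α → Prop} (h : IsDyadicHierarchy D)
include h

theorem refl (x y : α) : D x y x y :=
  (h.total x y x y).elim id id

theorem comap {f : β → α} (hf : f.Injective)
    (hbal : ∀ u v x, u ≠ v → ∃ y, relComap f D x y u v ∧ relComap f D u v x y) :
    IsDyadicHierarchy (relComap f D) where
  total _ _ _ _ := h.total _ _ _ _
  trans _ _ _ _ _ _ := h.trans _ _ _ _ _ _
  swap _ _ _ _ := h.swap _ _ _ _
  diag _ _ _ := h.diag _ _ _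
  eq_of_le_diag _ _ _ hzw := hf (h.eq_of_le_diag _ _ _ hzw)
  ultra _ _ _ _ _ := h.ultra _ _ _ _ _
  binary _ _ _ _ _ huv := h.binary _ _ _ _ _ (hf.ne huv)
  balanced := hbal

theorem comap_equiv (e : β ≃ α) : IsDyadicHierarchy (relComap e D) :=
  h.comap e.injective fun u v x huv => by
    obtain ⟨y, hxy, hyx⟩ := h.balanced (e u) (e v) (e x) (e.injective.ne huv)
    exact ⟨e.symm y, by simpa [relComap] using hxy, by simpa [relComap] using hyx⟩

theorem doubled : IsDyadicHierarchy (doubled D) where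
  total x y z w := by
    have := h.total x.1 y.1 z.1 w.1
    unfold DyadicHierarchy.doubled; tauto
  trans x y z w u v := by
    have := h.trans x.1 y.1 z.1 w.1 u.1 v.1
    unfold DyadicHierarchy.doubled; tauto
  swap x y z w := by
    have := h.swap x.1 y.1 z.1 w.1
    unfold DyadicHierarchy.doubled; grind
  diag x z w := Or.inl rfl
  eq_of_le_diag x z w := by unfold DyadicHierarchy.doubled; grind
  ultra u v x y z := by
    have := h.ultra u.1 v.1 x.1 y.1 z.1
    have := h.diag x.1 u.1 v.1
    have := h.diag y.1 u.1 v.1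
    unfold DyadicHierarchy.doubled; grind
  binary u v x y z huv := by
    have := h.binary u.1 v.1 x.1 y.1 z.1
    have := @Prod.eq_mk_not_of_fst_eq _ x y
    have := @Prod.eq_mk_not_of_fst_eq _ x z
    unfold DyadicHierarchy.doubled; grind
  balanced u v := by
    rintro ⟨a, b⟩ huv
    by_cases hb : u.1 = v.1
    · exact ⟨(a, !b), by simp [DyadicHierarchy.doubled, huv],
        by simp [DyadicHierarchy.doubled, huv, hb]⟩
    · obtain ⟨c, hac, hca⟩ := h.balanced u.1 v.1 a hb
      have hac' : a ≠ c := by rintro rfl; exact hb (h.eq_of_le_diag _ _ _ hca)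
      exact ⟨(c, false), by simp [DyadicHierarchy.doubled, *],
        by simp [DyadicHierarchy.doubled, *]⟩

theorem exists_isSibling_pair [Finite α] [Nontrivial α] : ∃ u v, IsSibling D u v := by
  let Pair := {p : α × α // p.1 ≠ p.2}
  let below : Pair → Pair → Prop := fun p q => ¬ D q.1.1 q.1.2 p.1.1 p.1.2
  have : IsTrans Pair below := ⟨fun p q r hpq hqr hrp =>
    hqr (h.trans _ _ _ _ _ _ hrp ((h.total _ _ _ _).resolve_left hpq))⟩
  have : Std.Irrefl below := ⟨fun p hp => hp (h.refl _ _)⟩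
  obtain ⟨u, v, huv⟩ := exists_pair_ne α
  obtain ⟨⟨⟨u, v⟩, huv⟩, -, hmin⟩ :=
    (Finite.wellFounded_of_trans_of_irrefl below).has_min Set.univ ⟨⟨(u, v), huv⟩, trivial⟩
  exact ⟨u, v, huv, fun z w hzw => not_not.mp (hmin ⟨(z, w), hzw⟩ trivial)⟩

theorem exists_isSibling [Finite α] [Nontrivial α] (x : α) : ∃ y, IsSibling D x y := by
  obtain ⟨u, v, huv, hmin⟩ := h.exists_isSibling_pair
  obtain ⟨y, hxy, hyx⟩ := h.balanced u v x huv
  refine ⟨y, ?_, fun z w hzw => h.trans _ _ _ _ _ _ hxy (hmin z w hzw)⟩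
  rintro rfl
  exact huv (h.eq_of_le_diag _ _ _ hyx)

theorem isSibling_symm {x y : α} (hxy : IsSibling D x y) : IsSibling D y x :=
  ⟨hxy.1.symm, fun z w hzw => h.swap _ _ _ _ (hxy.2 z w hzw)⟩

theorem isSibling_unique {x y z : α} (hy : IsSibling D x y) (hz : IsSibling D x z) : y = z := by
  by_contra hyz
  rcases h.binary x y x y z hy.1 (h.refl x y) (hz.2 x y hy.1) with h1 | h1 | h1
  · exact h1 (h.refl x y)
  · exact h1 (hy.2 x z hz.1)
  · exact h1.2 (hy.2 y z hyz)

theorem even_card [Finite α] [Nontrivial α] : Even (Nat.card α) := by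
  choose sib hsib using h.exists_isSibling
  have hinv : Function.Involutive sib := fun x =>
    h.isSibling_unique (hsib (sib x)) (h.isSibling_symm (hsib x))
  have hfree : Function.fixedPoints sib = ∅ :=
    Set.eq_empty_of_forall_notMem fun x hx => (hsib x).1 hx.symm
  simpa [hfree, Nat.ModEq, Nat.even_iff] using hinv.card_modEq_card_fixedPoints

theorem le_of_involutive_invariant {σ : α → α} (hσ : σ.Involutive)
    (hD : ∀ x y z w, D (σ x) (σ y) (σ z) (σ w) ↔ D x y z w) (x y : α) :
    D x y (σ x) (σ y) := by
  refine (h.total x y (σ x) (σ y)).elim id fun hle => ?_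
  simpa only [hσ _] using (hD (σ x) (σ y) x y).mpr hle

end IsDyadicHierarchy

namespace DyadicHierarchy

universe u

variable {α β : Type*}

def congr (e : α ≃ β) : DyadicHierarchy α ≃ DyadicHierarchy β where
  toFun D := ⟨relComap e.symm D.1, D.2.comap_equiv e.symm⟩
  invFun D := ⟨relComap e D.1, D.2.comap_equiv e⟩
  left_inv D := Subtype.ext (by funext x y z w; simp [relComap])
  right_inv D := Subtype.ext (by funext x y z w; simp [relComap])

theorem relComap_doubled {D : α → α → α → α → Prop} (h : IsDyadicHierarchy D) :
    relComap (·, false) (doubled D) = D := by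
  funext a b c d
  have := h.diag a c d
  have := h.eq_of_le_diag c a b
  simp only [relComap, doubled]
  grind

section Flip

variable [DecidableEq α]

def flipAt (i : α) (x : α × Bool) : α × Bool := if x.1 = i then (x.1, !x.2) else x

@[simp] theorem flipAt_fst (i : α) (x : α × Bool) : (flipAt i x).1 = x.1 := by
  unfold flipAt; split_ifs <;> rfl

theorem flipAt_involutive (i : α) : (flipAt i).Involutive := by
  rintro ⟨a, b⟩; unfold flipAt; split_ifs <;> simp_all

theorem flipAt_comm (i j : α) (x : α × Bool) :
    flipAt i (flipAt j x) = flipAt j (flipAt i x) := by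
  obtain ⟨a, b⟩ := x; unfold flipAt; split_ifs <;> simp_all

theorem flipAt_self (x : α × Bool) : flipAt x.1 x = (x.1, !x.2) := if_pos rfl

theorem flipAt_of_ne {i : α} {x : α × Bool} (h : x.1 ≠ i) : flipAt i x = x := if_neg h

theorem eq_or_eq_flipAt {x y : α × Bool} (h : x.1 = y.1) : y = x ∨ y = flipAt x.1 x := by
  rw [flipAt_self]
  by_cases hxy : x = y
  · exact Or.inl hxy.symm
  · exact Or.inr (Prod.eq_mk_not_of_fst_eq hxy h)

theorem relComap_flipAt_doubled (D : α → α → α → α → Prop) (i : α) :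
    relComap (flipAt i) (doubled D) = doubled D := by
  funext x y z w
  simp [relComap, doubled, (flipAt_involutive i).injective.eq_iff]

theorem card_modEq_card_flipInvariant [Finite α] (s : Finset α) :
    Nat.card (DyadicHierarchy (α × Bool)) ≡
      Nat.card {D // IsDyadicHierarchy D ∧ ∀ i ∈ s, relComap (flipAt i) D = D} [MOD 2] := by
  induction s using Finset.induction_on with
  | empty =>
    simp only [Finset.notMem_empty, IsEmpty.forall_iff, implies_true, and_true]
    rfl
  | insert i s _ ih =>
    refine ih.trans ?_
    have hpres : ∀ D, (IsDyadicHierarchy D ∧ ∀ j ∈ s, relComap (flipAt j) D = D) →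
        IsDyadicHierarchy (relComap (flipAt i) D) ∧
          ∀ j ∈ s, relComap (flipAt j) (relComap (flipAt i) D) = relComap (flipAt i) D := by
      rintro D ⟨hD, hinv⟩
      refine ⟨hD.comap_equiv (flipAt_involutive i).toPerm, fun j hj => ?_⟩
      conv_rhs => rw [← hinv j hj]
      funext x y z w
      simp only [relComap, flipAt_comm]
    refine ((relComap_involutive (flipAt_involutive i)).card_subtype_modEq hpres).trans ?_
    rw [Nat.card_congr (Equiv.subtypeEquivRight fun D => ?_)]
    simp only [Finset.forall_mem_insert]
    tauto

end Flip

section FlipInvariant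

variable [DecidableEq α] {D : α × Bool → α × Bool → α × Bool → α × Bool → Prop}
  (h : IsDyadicHierarchy D)
  (hinv : ∀ i x y z w, D (flipAt i x) (flipAt i y) (flipAt i z) (flipAt i w) ↔ D x y z w)
include h hinv

theorem isSibling_mk_not [Finite α] [Nonempty α] (x : α × Bool) : IsSibling D x (x.1, !x.2) := by
  obtain ⟨y, hy⟩ := h.exists_isSibling x
  by_cases hxy : x.1 = y.1
  · rwa [← Prod.eq_mk_not_of_fst_eq hy.1 hxy]
  · have hy' := hy.of_involutive_invariant (flipAt_involutive x.1) (hinv x.1)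
    rw [flipAt_self, flipAt_of_ne (Ne.symm hxy)] at hy'
    have := h.isSibling_unique (h.isSibling_symm hy) (h.isSibling_symm hy')
    simp [Prod.ext_iff] at this

theorem isSibling_iff [Finite α] [Nonempty α] {x y : α × Bool} (hxy : x ≠ y) :
    IsSibling D x y ↔ x.1 = y.1 := by
  refine ⟨fun hsib => ?_, fun hfst => ?_⟩
  · rw [h.isSibling_unique hsib (isSibling_mk_not h hinv x)]
  · rw [Prod.eq_mk_not_of_fst_eq hxy hfst]
    exact isSibling_mk_not h hinv x

theorem le_of_fst_eq {x y x' y' : α × Bool} (hxy : x.1 ≠ y.1) (hx : x.1 = x'.1)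
    (hy : y.1 = y'.1) : D x y x' y' := by
  have hleft : D x y x' y := by
    rcases eq_or_eq_flipAt hx with rfl | rfl
    · exact h.refl _ _
    · simpa only [flipAt_of_ne (Ne.symm hxy)] using
        h.le_of_involutive_invariant (flipAt_involutive x.1) (hinv x.1) x y
  have hright : D x' y x' y' := by
    rcases eq_or_eq_flipAt hy with rfl | rfl
    · exact h.refl _ _
    · simpa only [flipAt_of_ne (hx ▸ hxy)] using
        h.le_of_involutive_invariant (flipAt_involutive y.1) (hinv y.1) x' y
  exact h.trans _ _ _ _ _ _ hleft hright

theorem isDyadicHierarchy_relComap [Finite α] [Nonempty α] :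
    IsDyadicHierarchy (relComap (·, false) D) := by
  refine h.comap (fun a b hab => congrArg Prod.fst hab) fun u v a huv => ?_
  have huv' : (u, false) ≠ (v, false) := by simpa using huv
  obtain ⟨y, hay, hya⟩ := h.balanced (u, false) (v, false) (a, false) huv'
  have hay1 : a ≠ y.1 := by
    intro hfst
    by_cases hy : (a, false) = y
    · exact huv' (h.eq_of_le_diag _ _ _ (hy ▸ hya))
    · have hsib := (isSibling_iff h hinv hy).mpr hfst
      have hsib' : IsSibling D (u, false) (v, false) :=
        ⟨huv', fun z w hzw => h.trans _ _ _ _ _ _ hya (hsib.2 z w hzw)⟩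
      exact huv ((isSibling_iff h hinv huv').mp hsib')
  exact ⟨y.1, h.trans _ _ (a, false) y _ _ (le_of_fst_eq h hinv hay1 rfl rfl) hay,
    h.trans _ _ (a, false) y _ _ hya (le_of_fst_eq h hinv hay1 rfl rfl)⟩

theorem doubled_relComap [Finite α] [Nonempty α] : doubled (relComap (·, false) D) = D := by
  funext x y z w
  apply propext
  simp only [doubled, relComap]
  by_cases hxy : x = y
  · simp only [hxy, true_or, h.diag]
  by_cases hzw : z = w
  · subst hzw
    simp only [hxy, ne_eq, not_true_eq_false, false_and, or_false, false_iff]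
    exact fun hD => hxy (h.eq_of_le_diag _ _ _ hD)
  by_cases hfxy : x.1 = y.1
  · simp only [hxy, hzw, hfxy, ne_eq, not_false_eq_true, true_or, and_self, or_true, true_iff]
    exact ((isSibling_iff h hinv hxy).mpr hfxy).2 z w hzw
  by_cases hfzw : z.1 = w.1
  · simp only [hxy, hzw, hfxy, hfzw, ne_eq, not_false_eq_true, not_true_eq_false, false_and,
      or_false, and_false, false_iff]
    intro hD
    refine hfxy ((isSibling_iff h hinv hxy).mp ⟨hxy, fun a b hab => ?_⟩)
    exact h.trans _ _ _ _ _ _ hD (((isSibling_iff h hinv hzw).mpr hfzw).2 a b hab)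
  simp only [hxy, hzw, hfxy, hfzw, ne_eq, not_false_eq_true, true_and, false_or]
  have hx_le : D x y (x.1, false) (y.1, false) := le_of_fst_eq h hinv hfxy rfl rfl
  have hz_le : D (z.1, false) (w.1, false) z w := le_of_fst_eq h hinv hfzw rfl rfl
  have hle_x : D (x.1, false) (y.1, false) x y := le_of_fst_eq h hinv hfxy rfl rfl
  have hle_z : D z w (z.1, false) (w.1, false) := le_of_fst_eq h hinv hfzw rfl rfl
  exact ⟨fun hD => h.trans _ _ _ _ _ _ hx_le (h.trans _ _ _ _ _ _ hD hz_le),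
    fun hD => h.trans _ _ _ _ _ _ hle_x (h.trans _ _ _ _ _ _ hD hle_z)⟩

end FlipInvariant

def flipInvariantEquiv [DecidableEq α] [Finite α] [Nonempty α] :
    {D // IsDyadicHierarchy D ∧ ∀ i : α, relComap (flipAt i) D = D} ≃ DyadicHierarchy α where
  toFun D := ⟨relComap (·, false) D.1, isDyadicHierarchy_relComap D.2.1
    fun i => relComap_eq_self_iff.mp (D.2.2 i)⟩
  invFun D := ⟨doubled D.1, D.2.doubled, fun i => relComap_flipAt_doubled D.1 i⟩
  left_inv D := Subtype.ext (doubled_relComap D.2.1 fun i => relComap_eq_self_iff.mp (D.2.2 i))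
  right_inv D := Subtype.ext (relComap_doubled D.2)

theorem card_prod_bool_modEq [Finite α] [Nonempty α] :
    Nat.card (DyadicHierarchy (α × Bool)) ≡ Nat.card (DyadicHierarchy α) [MOD 2] := by
  classical
  cases nonempty_fintype α
  refine (card_modEq_card_flipInvariant Finset.univ).trans ?_
  simp only [Finset.mem_univ, true_imp_iff]
  rw [Nat.card_congr flipInvariantEquiv]

theorem card_of_subsingleton [Subsingleton α] : Nat.card (DyadicHierarchy α) = 1 := by
  have htop : IsDyadicHierarchy (fun _ _ _ _ : α => True) :=
    { total := by simp
      trans := by simp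
      swap := by simp
      diag := by simp
      eq_of_le_diag := fun _ _ _ _ => Subsingleton.elim _ _
      ultra := by simp
      binary := fun u v _ _ _ huv => absurd (Subsingleton.elim u v) huv
      balanced := fun u v _ huv => absurd (Subsingleton.elim u v) huv }
  refine Nat.card_eq_one_iff_exists.mpr ⟨⟨_, htop⟩, fun D => Subtype.ext ?_⟩
  funext x y z w
  simp [Subsingleton.elim x y, D.2.diag]

theorem odd_card_iff {α : Type u} [Finite α] [Nonempty α] :
    Odd (Nat.card (DyadicHierarchy α)) ↔ (Nat.card α).isPowerOfTwo := by
  induction hn : Nat.card α using Nat.strong_induction_on generalizing α with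
  | _ n ih =>
  have hpos : 0 < n := hn ▸ Finite.card_pos
  obtain ⟨k, rfl | rfl⟩ := Nat.even_or_odd' n
  · let β := ULift.{u} (Fin k)
    have : Nonempty β := ⟨⟨⟨0, by omega⟩⟩⟩
    have e : α ≃ β × Bool := (Finite.card_eq.mp (by simp [β, hn, mul_comm])).some
    have hmod : Nat.card (DyadicHierarchy α) % 2 = Nat.card (DyadicHierarchy β) % 2 := by
      rw [Nat.card_congr (congr e)]
      exact card_prod_bool_modEq
    rw [Nat.odd_iff, hmod, ← Nat.odd_iff, ih k (by omega) (by simp [β]),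
      Nat.isPowerOfTwo_two_mul_iff]
  · rcases k.eq_zero_or_pos with rfl | hk
    · have : Subsingleton α := Finite.card_le_one_iff_subsingleton.mp hn.le
      rw [card_of_subsingleton]
      exact iff_of_true odd_one Nat.isPowerOfTwo_one
    · have : Nontrivial α := Finite.one_lt_card_iff_nontrivial.mp (by omega)
      have : IsEmpty (DyadicHierarchy α) := ⟨fun D => by
        have := D.2.even_card
        rw [hn] at this
        exact Nat.not_even_iff_odd.mpr (odd_two_mul_add_one k) this⟩
      rw [Nat.card_of_isEmpty]
      exact iff_of_false (by decide)
        (Nat.not_isPowerOfTwo_of_odd (odd_two_mul_add_one k) (by omega))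

end DyadicHierarchy
namespace Rels4

def R : (relLang rels4).Relations 4 := (0 : Fin 1)

def atom {k : ℕ} (a b c d : Fin k) : (relLang rels4).BoundedFormula Empty k :=
  R.boundedFormula ![&a, &b, &c, &d]

/-- One conjunct per field of `IsDyadicHierarchy`, in order, with the variables numbered in the
order in which the field quantifies them. -/
def hierarchySentence : (relLang rels4).Sentence :=
  BoundedFormula.alls (n := 4) (atom 0 1 2 3 ⊔ atom 2 3 0 1) ⊓
  BoundedFormula.alls (n := 6) (atom 0 1 2 3 ⟹ atom 2 3 4 5 ⟹ atom 0 1 4 5) ⊓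
  BoundedFormula.alls (n := 4) (atom 0 1 2 3 ⟹ atom 1 0 2 3) ⊓
  BoundedFormula.alls (n := 3) (atom 0 0 1 2) ⊓
  BoundedFormula.alls (n := 3) (atom 1 2 0 0 ⟹ &1 =' &2) ⊓
  BoundedFormula.alls (n := 5) (atom 2 3 0 1 ⟹ atom 3 4 0 1 ⟹ atom 2 4 0 1) ⊓
  BoundedFormula.alls (n := 5) (∼(&0 =' &1) ⟹ atom 2 3 0 1 ⟹ atom 2 4 0 1 ⟹
    ∼(atom 0 1 2 3) ⊔ (∼(atom 0 1 2 4) ⊔ (atom 3 4 0 1 ⊓ ∼(atom 0 1 3 4)))) ⊓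
  BoundedFormula.alls (n := 3) (∼(&0 =' &1) ⟹ ∃' (atom 2 3 0 1 ⊓ atom 0 1 2 3))

variable {M : Type}

def toRel (S : ∀ k, rels4 k → (Fin k → M) → Prop) : M → M → M → M → Prop :=
  fun x y z w => S 4 R ![x, y, z, w]

def ofRel (D : M → M → M → M → Prop) : ∀ k, rels4 k → (Fin k → M) → Prop
  | 4, _, v => D (v 0) (v 1) (v 2) (v 3)
  | 0, r, _ | 1, r, _ | 2, r, _ | 3, r, _ | _ + 5, r, _ => r.elim

def interpEquiv : (∀ k, rels4 k → (Fin k → M) → Prop) ≃ (M → M → M → M → Prop) where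
  toFun := toRel
  invFun := ofRel
  left_inv S := by
    funext k r v
    match k, r with
    | 4, r =>
      show S 4 R ![v 0, v 1, v 2, v 3] = S 4 r v
      rw [Subsingleton.elim (α := Fin 1) R r]
      congr; funext i; fin_cases i <;> rfl
    | 0, r | 1, r | 2, r | 3, r | _ + 5, r => exact r.elim
  right_inv _ := rfl

theorem realize_atom (S : ∀ k, rels4 k → (Fin k → M) → Prop) {k : ℕ} (a b c d : Fin k)
    (v : Empty → M) (xs : Fin k → M) :
    (letI := relLang.mkStructure S; (atom a b c d).Realize v xs) ↔
      toRel S (xs a) (xs b) (xs c) (xs d) := by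
  let := relLang.mkStructure S
  simp only [atom, BoundedFormula.realize_rel]
  have : (fun i => ((![&a, &b, &c, &d] : Fin 4 → (relLang rels4).Term (Empty ⊕ Fin k)) i).realize
      (Sum.elim v xs)) = ![xs a, xs b, xs c, xs d] := by
    funext i; fin_cases i <;> rfl
  rw [this]; rfl

theorem realize_hierarchySentence (S : ∀ k, rels4 k → (Fin k → M) → Prop) :
    (letI := relLang.mkStructure S; M ⊨ hierarchySentence) ↔ IsDyadicHierarchy (toRel S) := by
  let := relLang.mkStructure S
  simp only [hierarchySentence, Sentence.Realize, Formula.realize_inf, BoundedFormula.realize_alls,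
    BoundedFormula.realize_imp, BoundedFormula.realize_sup, BoundedFormula.realize_inf,
    BoundedFormula.realize_not, BoundedFormula.realize_ex, BoundedFormula.realize_bdEqual,
    Term.realize_var, Function.comp_apply, Sum.elim_inr, Fin.forall_fin_succ_pi,
    Fin.forall_fin_zero_pi, realize_atom]
  exact ⟨fun ⟨⟨⟨⟨⟨⟨⟨h1, h2⟩, h3⟩, h4⟩, h5⟩, h6⟩, h7⟩, h8⟩ => ⟨h1, h2, h3, h4, h5, h6, h7, h8⟩,
    fun h => ⟨⟨⟨⟨⟨⟨⟨h.1, h.2⟩, h.3⟩, h.4⟩, h.5⟩, h.6⟩, h.7⟩, h.8⟩⟩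

theorem spCount_hierarchySentence (n : ℕ) :
    spCount hierarchySentence n = Nat.card (DyadicHierarchy (Fin n)) :=
  Nat.card_congr (interpEquiv.subtypeEquiv realize_hierarchySentence)

end Rels4

theorem not_mcFinite_of_odd_iff_isPowerOfTwo {s : ℕ → ℕ}
    (hs : ∀ n, 0 < n → (Odd (s n) ↔ n.isPowerOfTwo)) : ¬ MCFinite s := by
  intro hmc
  obtain ⟨r, p, hp, hper⟩ := hmc 2 le_rfl
  set N := 2 ^ (r + p) with hN
  have hrN : r < N := Nat.lt_two_pow_self.trans_le (Nat.pow_le_pow_right two_pos (by omega))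
  have hpN : p < N := Nat.lt_two_pow_self.trans_le (Nat.pow_le_pow_right two_pos (by omega))
  have hNp : ¬ (N + p).isPowerOfTwo := by
    rintro ⟨e, he⟩
    have h1 : 2 ^ (r + p) < 2 ^ e := by omega
    have h2 : 2 ^ e < 2 ^ (r + p + 1) := by rw [pow_succ]; omega
    rw [Nat.pow_lt_pow_iff_right (by norm_num)] at h1 h2
    omega
  have hodd : Odd (s N) := (hs N (by positivity)).mpr ⟨r + p, rfl⟩
  have hper' : s (N + p) % 2 = s N % 2 := hper N hrN.le
  exact hNp ((hs _ (by omega)).mp (Nat.odd_iff.mpr (hper'.trans (Nat.odd_iff.mp hodd))))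

/-- **Fischer's quaternary counterexample (2002).**
There is a first-order sentence φ over the vocabulary consisting of a single quaternary
relation symbol such that the sequence Sp_φ(n) is not MC-finite. -/
theorem single_quaternary_relation_not_mcfinite :
    ∃ φ : (relLang rels4).Sentence, ¬ MCFinite (spCount φ) := by
  refine ⟨Rels4.hierarchySentence, not_mcFinite_of_odd_iff_isPowerOfTwo fun n hn => ?_⟩
  have : Nonempty (Fin n) := ⟨⟨0, hn⟩⟩
  rw [Rels4.spCount_hierarchySentence, DyadicHierarchy.odd_card_iff, Nat.card_fin]
end

section
/- Let f_M(n) denote the number of full iterated matching sequences over the vertex set [n] = {1,…,n}. Then f_M(n) = 0 for every n that is not a power of 2, and f_M(n) ≡ 1 (mod 2) whenever n = 2^m for some m ∈ ℕ. -/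
/-- The union E₁ ⊔ ⋯ ⊔ Eᵢ of the first `i` graphs of the list `E`. -/
def unionUpTo {V : Type} (E : List (SimpleGraph V)) (i : ℕ) : SimpleGraph V :=
  (E.take i).foldr (· ⊔ ·) ⊥

/-- `E = E₁,…,E_ℓ` is an iterated matching sequence: for each `i`, writing `U` for
`E₁ ∪ ⋯ ∪ E_{i-1}`, the connected components of `Eᵢ` are vertex-disjoint complete
bipartite graphs whose two vertex classes are two (distinct) connected components of
`U`, and every connected component of `U` is a vertex class of some such bipartite
graph. -/
def IsIteratedMatchingSeq {V : Type} (E : List (SimpleGraph V)) : Prop :=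
  ∀ i, i < E.length →
    ((∀ u v, (E.getD i ⊥).Adj u v →
        (unionUpTo E i).connectedComponentMk u ≠ (unionUpTo E i).connectedComponentMk v) ∧
     (∀ u v u' v', (E.getD i ⊥).Adj u v →
        (unionUpTo E i).connectedComponentMk u' = (unionUpTo E i).connectedComponentMk u →
        (unionUpTo E i).connectedComponentMk v' = (unionUpTo E i).connectedComponentMk v →
        (E.getD i ⊥).Adj u' v') ∧
     (∀ u v w, (E.getD i ⊥).Adj u v → (E.getD i ⊥).Adj v w →
        (unionUpTo E i).connectedComponentMk u = (unionUpTo E i).connectedComponentMk w) ∧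
     (∀ u, ∃ v, (E.getD i ⊥).Adj u v))

/-- A sequence of graphs is full if every pair of distinct vertices is an edge of one
of its members. -/
def IsFullSeq {V : Type} (E : List (SimpleGraph V)) : Prop :=
  ∀ u v : V, u ≠ v → ∃ i, i < E.length ∧ (E.getD i ⊥).Adj u v

/-- `f_M(n)`: the number of full iterated matching sequences over the vertex set [n]. -/
noncomputable def fM (n : ℕ) : ℕ :=
  Nat.card { E : List (SimpleGraph (Fin n)) // IsIteratedMatchingSeq E ∧ IsFullSeq E }

/-! The components of `E₁ ∪ ⋯ ∪ Eᵢ` double in size at every step, because `Eᵢ₊₁` pairs them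
off, and a full sequence ends with a single component; hence `n = 2 ^ ℓ`. For `n = 0` every list
is a full sequence, and `Nat.card` of the resulting infinite type is `0`.

For `n = 2 ^ m`, the automorphism group of the binary tree with leaves `Fin (2 ^ m)` is a
`2`-group acting on full sequences, so their number is congruent mod `2` to the number of fixed
sequences. Invariance under exchanging the two halves of a single block forces a fixed sequence,
level by level, to be the standard one whose `i`-th graph joins the two halves of every block of
size `2 ^ (i + 1)`. -/

open SimpleGraph

variable {V W : Type}

lemma foldr_sup_adj (l : List (SimpleGraph V)) {u v : V} :
    (l.foldr (· ⊔ ·) ⊥).Adj u v ↔ ∃ G ∈ l, G.Adj u v := by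
  induction l with
  | nil => simp
  | cons G l ih => simp [ih]

lemma unionUpTo_adj (E : List (SimpleGraph V)) (i : ℕ) {u v : V} :
    (unionUpTo E i).Adj u v ↔ ∃ j < i, (E.getD j ⊥).Adj u v := by
  rw [unionUpTo, foldr_sup_adj]
  constructor
  · rintro ⟨G, hG, h⟩
    obtain ⟨j, hj, rfl⟩ := List.mem_take_iff_getElem.mp hG
    exact ⟨j, (lt_min_iff.mp hj).1, by rwa [List.getD_eq_getElem _ _ (lt_min_iff.mp hj).2]⟩
  · rintro ⟨j, hji, h⟩
    by_cases hj : j < E.length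
    · rw [List.getD_eq_getElem _ _ hj] at h
      exact ⟨_, List.mem_take_iff_getElem.mpr ⟨j, lt_min hji hj, rfl⟩, h⟩
    · rw [List.getD_eq_default _ _ (not_lt.mp hj)] at h
      exact ((bot_adj u v).mp h).elim

lemma unionUpTo_succ (E : List (SimpleGraph V)) (i : ℕ) :
    unionUpTo E (i + 1) = unionUpTo E i ⊔ E.getD i ⊥ := by
  ext u v
  simp only [sup_adj, unionUpTo_adj, Nat.lt_succ_iff_lt_or_eq, or_and_right, exists_or,
    exists_eq_left]

lemma unionUpTo_congr {E E' : List (SimpleGraph V)} {i : ℕ}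
    (h : ∀ j < i, E.getD j ⊥ = E'.getD j ⊥) : unionUpTo E i = unionUpTo E' i := by
  ext u v
  simp only [unionUpTo_adj]
  exact exists_congr fun j => and_congr_right fun hj => by rw [h j hj]

/-- Condition `i` of `IsIteratedMatchingSeq`, with "same component of `E₁ ∪ ⋯ ∪ Eᵢ₋₁`"
abstracted to a relation `r`. -/
structure IsMatchingStep (r : V → V → Prop) (H : SimpleGraph V) : Prop where
  not_rel_of_adj : ∀ {u v}, H.Adj u v → ¬ r u v
  adj_of_rel : ∀ {u v u' v'}, H.Adj u v → r u' u → r v' v → H.Adj u' v'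
  rel_of_adj_of_adj : ∀ {u v w}, H.Adj u v → H.Adj v w → r u w
  exists_adj : ∀ u, ∃ v, H.Adj u v

lemma isIteratedMatchingSeq_iff {E : List (SimpleGraph V)} :
    IsIteratedMatchingSeq E ↔
      ∀ i < E.length, IsMatchingStep (unionUpTo E i).Reachable (E.getD i ⊥) := by
  simp only [IsIteratedMatchingSeq, ne_eq, ConnectedComponent.eq]
  refine forall₂_congr fun i _ => ⟨fun ⟨h₁, h₂, h₃, h₄⟩ => ⟨h₁ _ _, h₂ _ _ _ _, h₃ _ _ _, h₄⟩,
    fun ⟨h₁, h₂, h₃, h₄⟩ => ⟨@h₁, @h₂, @h₃, h₄⟩⟩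

namespace IsMatchingStep

variable {U H : SimpleGraph V}

lemma reachable_sup_iff (hH : IsMatchingStep U.Reachable H) {u v : V} (huv : H.Adj u v)
    (x : V) : (U ⊔ H).Reachable u x ↔ U.Reachable u x ∨ U.Reachable v x := by
  constructor
  · intro hx
    rw [reachable_iff_reflTransGen] at hx
    induction hx with
    | refl => exact Or.inl .rfl
    | tail _ hyz ih =>
      rcases hyz with hyz | hyz
      · exact ih.imp (·.trans hyz.reachable) (·.trans hyz.reachable)
      · rcases ih with hy | hy
        · exact Or.inr (hH.rel_of_adj_of_adj (hH.adj_of_rel huv hy.symm .rfl).symm hyz)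
        · exact Or.inl (hH.rel_of_adj_of_adj (hH.adj_of_rel huv.symm hy.symm .rfl).symm hyz)
  · rintro (hx | hx)
    · exact hx.mono le_sup_left
    · exact (huv.reachable.mono le_sup_right).trans (hx.mono le_sup_left)

lemma comap {r : V → V → Prop} (hH : IsMatchingStep r H) (f : W ≃ V) :
    IsMatchingStep (fun a b => r (f a) (f b)) (H.comap f) where
  not_rel_of_adj h := hH.not_rel_of_adj h
  adj_of_rel h hu hv := hH.adj_of_rel h hu hv
  rel_of_adj_of_adj h h' := hH.rel_of_adj_of_adj h h'
  exists_adj u := by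
    obtain ⟨v, huv⟩ := hH.exists_adj (f u)
    exact ⟨f.symm v, by simpa using huv⟩

end IsMatchingStep

namespace IsIteratedMatchingSeq

variable {E : List (SimpleGraph V)}

lemma ncard_setOf_reachable [Finite V] (hE : IsIteratedMatchingSeq E) {i : ℕ}
    (hi : i ≤ E.length) (u : V) : {x | (unionUpTo E i).Reachable u x}.ncard = 2 ^ i := by
  induction i generalizing u with
  | zero => simp [unionUpTo, reachable_bot]
  | succ i ih =>
    have hstep := isIteratedMatchingSeq_iff.mp hE i hi
    obtain ⟨v, huv⟩ := hstep.exists_adj u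
    have hsplit : {x | (unionUpTo E (i + 1)).Reachable u x}
        = {x | (unionUpTo E i).Reachable u x} ∪ {x | (unionUpTo E i).Reachable v x} := by
      ext x
      rw [unionUpTo_succ]
      exact hstep.reachable_sup_iff huv x
    have hdisj : Disjoint {x | (unionUpTo E i).Reachable u x}
        {x | (unionUpTo E i).Reachable v x} :=
      Set.disjoint_left.mpr fun _ hu hv => hstep.not_rel_of_adj huv (hu.trans hv.symm)
    rw [hsplit, Set.ncard_union_eq hdisj, ih (by omega), ih (by omega), pow_succ, mul_two]

lemma card_eq_two_pow_length [Finite V] [Nonempty V] (hE : IsIteratedMatchingSeq E)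
    (hfull : IsFullSeq E) : Nat.card V = 2 ^ E.length := by
  obtain ⟨u⟩ := ‹Nonempty V›
  have hconn : {x | (unionUpTo E E.length).Reachable u x} = Set.univ := by
    refine Set.eq_univ_of_forall fun x => ?_
    rcases eq_or_ne u x with rfl | hux
    · exact .rfl
    · obtain ⟨i, hi, hadj⟩ := hfull u x hux
      exact ((unionUpTo_adj E _).mpr ⟨i, hi, hadj⟩).reachable
  rw [← Set.ncard_univ, ← hconn, hE.ncard_setOf_reachable le_rfl]

end IsIteratedMatchingSeq

abbrev FullMatchingSeq (V : Type) : Type :=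
  {E : List (SimpleGraph V) // IsIteratedMatchingSeq E ∧ IsFullSeq E}

lemma fM_zero : fM 0 = 0 := by
  have hall (E : List (SimpleGraph (Fin 0))) : IsIteratedMatchingSeq E ∧ IsFullSeq E :=
    ⟨fun _ _ => ⟨finZeroElim, finZeroElim, finZeroElim, finZeroElim⟩, finZeroElim⟩
  have : Infinite (FullMatchingSeq (Fin 0)) :=
    (Equiv.subtypeUnivEquiv hall).infinite_iff.mpr inferInstance
  exact Nat.card_eq_zero_of_infinite

lemma fM_eq_zero_of_ne_two_pow {n : ℕ} (hn : ¬ ∃ m, n = 2 ^ m) : fM n = 0 := by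
  rcases Nat.eq_zero_or_pos n with rfl | hpos
  · exact fM_zero
  · have : NeZero n := ⟨hpos.ne'⟩
    have : IsEmpty (FullMatchingSeq (Fin n)) :=
      ⟨fun E => hn ⟨E.1.length, by simpa using E.2.1.card_eq_two_pow_length E.2.2⟩⟩
    exact Nat.card_of_isEmpty

lemma reachable_equiv_simpleGraph_iff (e : V ≃ W) (G : SimpleGraph V) {u v : W} :
    (e.simpleGraph G).Reachable u v ↔ G.Reachable (e.symm u) (e.symm v) :=
  (Iso.comap e.symm G).reachable_iff.symm

lemma adj_apply_iff_of_equiv_simpleGraph_eq {H : SimpleGraph V} {e : Equiv.Perm V}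
    (h : e.simpleGraph H = H) {u v : V} : H.Adj (e u) (e v) ↔ H.Adj u v := by
  conv_lhs => rw [← h]
  simp

lemma getD_map_equiv_simpleGraph (e : V ≃ W) (E : List (SimpleGraph V)) (i : ℕ) :
    (E.map e.simpleGraph).getD i ⊥ = e.simpleGraph (E.getD i ⊥) := by
  simpa using List.getD_map E ⊥ (n := i) e.simpleGraph

lemma unionUpTo_map_equiv_simpleGraph (e : V ≃ W) (E : List (SimpleGraph V)) (i : ℕ) :
    unionUpTo (E.map e.simpleGraph) i = e.simpleGraph (unionUpTo E i) := by
  ext u v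
  simp only [unionUpTo_adj, getD_map_equiv_simpleGraph, Equiv.simpleGraph_apply, comap_adj]

lemma IsIteratedMatchingSeq.map_equiv {E : List (SimpleGraph V)} (hE : IsIteratedMatchingSeq E)
    (e : V ≃ W) : IsIteratedMatchingSeq (E.map e.simpleGraph) := by
  rw [isIteratedMatchingSeq_iff] at hE ⊢
  intro i hi
  rw [List.length_map] at hi
  have hr : (unionUpTo (E.map e.simpleGraph) i).Reachable
      = fun u v => (unionUpTo E i).Reachable (e.symm u) (e.symm v) := by
    ext u v
    rw [unionUpTo_map_equiv_simpleGraph, reachable_equiv_simpleGraph_iff]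
  rw [hr, getD_map_equiv_simpleGraph]
  exact (hE i hi).comap e.symm

lemma IsFullSeq.map_equiv {E : List (SimpleGraph V)} (hE : IsFullSeq E) (e : V ≃ W) :
    IsFullSeq (E.map e.simpleGraph) := by
  intro u v huv
  obtain ⟨i, hi, hadj⟩ := hE (e.symm u) (e.symm v) (e.symm.injective.ne huv)
  exact ⟨i, by simpa using hi, by rwa [getD_map_equiv_simpleGraph]⟩

instance : MulAction (Equiv.Perm V) (FullMatchingSeq V) where
  smul e E := ⟨E.1.map e.simpleGraph, E.2.1.map_equiv e, E.2.2.map_equiv e⟩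
  one_smul E := Subtype.ext <| by
    change E.1.map (Equiv.refl V).simpleGraph = E.1
    rw [Equiv.simpleGraph_refl, Equiv.coe_refl, List.map_id]
  mul_smul e e' E := Subtype.ext <| by
    change E.1.map (e'.trans e).simpleGraph = (E.1.map e'.simpleGraph).map e.simpleGraph
    rw [Equiv.simpleGraph_trans, List.map_map, Equiv.coe_trans]

lemma FullMatchingSeq.smul_val (e : Equiv.Perm V) (E : FullMatchingSeq V) :
    (e • E).1 = E.1.map e.simpleGraph := rfl

lemma FullMatchingSeq.length_eq [Finite V] [Nonempty V] (E : FullMatchingSeq V) :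
    E.1.length = Nat.log 2 (Nat.card V) := by
  rw [E.2.1.card_eq_two_pow_length E.2.2, Nat.log_pow one_lt_two]

instance [Finite V] [Nonempty V] : Finite (FullMatchingSeq V) :=
  have := (List.finite_length_eq (SimpleGraph V) (Nat.log 2 (Nat.card V))).to_subtype
  Finite.of_injective (fun E => (⟨E.1, E.length_eq⟩ : {l : List _ | l.length = _}))
    fun _ _ h => Subtype.ext (congrArg Subtype.val h :)

namespace Nat

lemma shiftRight_eq_shiftRight_of_le {a b i j : ℕ} (hij : i ≤ j) (h : a >>> i = b >>> i) :
    a >>> j = b >>> j := by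
  obtain ⟨k, rfl⟩ := Nat.exists_eq_add_of_le hij
  rw [shiftRight_add, shiftRight_add, h]

/-- A block of level `i + 1` is the union of just two blocks of level `i`. -/
lemma shiftRight_eq_of_ne_of_ne {a b c i : ℕ} (hab : a >>> (i + 1) = b >>> (i + 1))
    (hbc : b >>> (i + 1) = c >>> (i + 1)) (hab' : a >>> i ≠ b >>> i)
    (hbc' : b >>> i ≠ c >>> i) : a >>> i = c >>> i := by
  simp only [shiftRight_succ] at hab hbc
  omega

lemma xor_two_pow_shiftRight_succ (a i : ℕ) : (a ^^^ 2 ^ i) >>> (i + 1) = a >>> (i + 1) := by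
  rw [shiftRight_xor_distrib, shiftRight_eq_zero _ _ (Nat.pow_lt_pow_succ one_lt_two), xor_zero]

lemma xor_two_pow_shiftRight_ne (a i : ℕ) : (a ^^^ 2 ^ i) >>> i ≠ a >>> i := by
  have : 2 ^ i >>> i = 1 := by rw [shiftRight_eq_div_pow, Nat.div_self (Nat.two_pow_pos i)]
  rw [shiftRight_xor_distrib, this]
  intro h
  exact one_ne_zero (Nat.xor_right_inj.mp (h.trans (xor_zero _).symm))

end Nat

variable {m : ℕ}

/-- The automorphism group of the complete binary tree with leaves `Fin (2 ^ m)`, whose vertices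
at height `i` are the blocks `{u | u >>> i = b}`. -/
def treeAut (m : ℕ) : Subgroup (Equiv.Perm (Fin (2 ^ m))) where
  carrier := {π | ∀ i u v, (π u).val >>> i = (π v).val >>> i ↔ u.val >>> i = v.val >>> i}
  one_mem' _ _ _ := Iff.rfl
  mul_mem' hπ hρ i u v := (hπ i _ _).trans (hρ i u v)
  inv_mem' {π} hπ i u v := by simpa using (hπ i (π⁻¹ u) (π⁻¹ v)).symm

/-- `σ` either fixes or swaps the two halves of each block of level `t + 1`. -/
lemma apply_apply_shiftRight_eq {σ : Equiv.Perm (Fin (2 ^ m))} (hσ : σ ∈ treeAut m) {t : ℕ}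
    (h : ∀ u, (σ u).val >>> (t + 1) = u.val >>> (t + 1)) (u : Fin (2 ^ m)) :
    (σ (σ u)).val >>> t = u.val >>> t := by
  by_cases hu : (σ u).val >>> t = u.val >>> t
  · exact ((hσ t (σ u) u).mpr hu).trans hu
  · exact Nat.shiftRight_eq_of_ne_of_ne (h (σ u)) (h u) (mt (hσ t _ _).mp hu) hu

lemma pow_two_pow_apply_shiftRight_eq {σ : Equiv.Perm (Fin (2 ^ m))} (hσ : σ ∈ treeAut m)
    {k : ℕ} (hk : k ≤ m) (u : Fin (2 ^ m)) :
    ((σ ^ 2 ^ k) u).val >>> (m - k) = u.val >>> (m - k) := by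
  induction k generalizing u with
  | zero => simp only [Nat.sub_zero, Nat.shiftRight_eq_zero _ _ (Fin.is_lt _)]
  | succ k ih =>
    have hsq : σ ^ 2 ^ (k + 1) = σ ^ 2 ^ k * σ ^ 2 ^ k := by rw [pow_succ, pow_mul, sq]
    have hmk : m - k = m - (k + 1) + 1 := by omega
    rw [hsq, Equiv.Perm.mul_apply]
    exact apply_apply_shiftRight_eq (pow_mem hσ _) (hmk ▸ ih (by omega)) u

lemma isPGroup_treeAut (m : ℕ) : IsPGroup 2 (treeAut m) := fun σ =>
  ⟨m, Subtype.ext <| Equiv.ext fun u => Fin.ext <| by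
    simpa using pow_two_pow_apply_shiftRight_eq σ.2 le_rfl u⟩

def flipBit {i : ℕ} (hi : i < m) (u : Fin (2 ^ m)) : Fin (2 ^ m) :=
  ⟨u.val ^^^ 2 ^ i, Nat.xor_lt_two_pow u.isLt (Nat.pow_lt_pow_right one_lt_two hi)⟩

lemma flipBit_flipBit {i : ℕ} (hi : i < m) (u : Fin (2 ^ m)) : flipBit hi (flipBit hi u) = u :=
  Fin.ext (Nat.xor_xor_cancel_right _ _)

def swapHalves {i : ℕ} (hi : i < m) (b : ℕ) : Equiv.Perm (Fin (2 ^ m)) :=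
  Function.Involutive.toPerm (fun u => if u.val >>> (i + 1) = b then flipBit hi u else u) <| by
    intro u
    by_cases hu : u.val >>> (i + 1) = b
    · have : (flipBit hi u).val >>> (i + 1) = b := (Nat.xor_two_pow_shiftRight_succ _ _).trans hu
      simp [hu, this, flipBit_flipBit]
    · simp [hu]

lemma swapHalves_apply {i : ℕ} (hi : i < m) (b : ℕ) (u : Fin (2 ^ m)) :
    swapHalves hi b u = if u.val >>> (i + 1) = b then flipBit hi u else u :=
  rfl

lemma swapHalves_shiftRight_succ {i : ℕ} (hi : i < m) (b : ℕ) (u : Fin (2 ^ m)) :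
    (swapHalves hi b u).val >>> (i + 1) = u.val >>> (i + 1) := by
  rw [swapHalves_apply]
  split_ifs
  · exact Nat.xor_two_pow_shiftRight_succ _ _
  · rfl

lemma swapHalves_mem_treeAut {i : ℕ} (hi : i < m) (b : ℕ) : swapHalves hi b ∈ treeAut m := by
  intro t u v
  rcases le_or_gt (i + 1) t with hit | hti
  · rw [Nat.shiftRight_eq_shiftRight_of_le hit (swapHalves_shiftRight_succ hi b u),
      Nat.shiftRight_eq_shiftRight_of_le hit (swapHalves_shiftRight_succ hi b v)]
  by_cases huv : u.val >>> (i + 1) = v.val >>> (i + 1)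
  · by_cases hu : u.val >>> (i + 1) = b
    · simp [swapHalves_apply, hu, ← huv, flipBit, Nat.shiftRight_xor_distrib, Nat.xor_left_inj]
    · simp [swapHalves_apply, hu, ← huv]
  · refine iff_of_false (fun h => huv ?_)
      (fun h => huv (Nat.shiftRight_eq_shiftRight_of_le hti.le h))
    simpa only [swapHalves_shiftRight_succ] using Nat.shiftRight_eq_shiftRight_of_le hti.le h

def levelGraph (m i : ℕ) : SimpleGraph (Fin (2 ^ m)) where
  Adj u v := u.val >>> (i + 1) = v.val >>> (i + 1) ∧ u.val >>> i ≠ v.val >>> i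
  symm := ⟨fun _ _ h => ⟨h.1.symm, h.2.symm⟩⟩
  loopless := ⟨fun _ h => h.2 rfl⟩

lemma levelGraph_adj {i : ℕ} {u v : Fin (2 ^ m)} :
    (levelGraph m i).Adj u v ↔ u.val >>> (i + 1) = v.val >>> (i + 1) ∧ u.val >>> i ≠ v.val >>> i :=
  Iff.rfl

def levelSeq (m : ℕ) : List (SimpleGraph (Fin (2 ^ m))) := (List.range m).map (levelGraph m)

lemma levelSeq_length (m : ℕ) : (levelSeq m).length = m := by simp [levelSeq]

lemma levelSeq_getD {i : ℕ} (hi : i < m) : (levelSeq m).getD i ⊥ = levelGraph m i := by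
  simp [levelSeq, hi]

lemma isMatchingStep_levelGraph {i : ℕ} (hi : i < m) :
    IsMatchingStep (fun u v : Fin (2 ^ m) => u.val >>> i = v.val >>> i) (levelGraph m i) where
  not_rel_of_adj h := (levelGraph_adj.mp h).2
  adj_of_rel h hu hv := by
    obtain ⟨h₁, h₂⟩ := levelGraph_adj.mp h
    exact ⟨(Nat.shiftRight_eq_shiftRight_of_le i.le_succ hu).trans
      (h₁.trans (Nat.shiftRight_eq_shiftRight_of_le i.le_succ hv).symm), by rwa [hu, hv]⟩
  rel_of_adj_of_adj h h' := by
    rw [levelGraph_adj] at h h'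
    exact Nat.shiftRight_eq_of_ne_of_ne h.1 h'.1 h.2 h'.2
  exists_adj u := ⟨flipBit hi u, (Nat.xor_two_pow_shiftRight_succ _ _).symm,
    (Nat.xor_two_pow_shiftRight_ne _ _).symm⟩

lemma reachable_unionUpTo_levelSeq {i : ℕ} (hi : i ≤ m) :
    (unionUpTo (levelSeq m) i).Reachable = fun u v => u.val >>> i = v.val >>> i := by
  ext u v
  constructor
  · rw [reachable_iff_reflTransGen]
    refine Relation.reflTransGen_le_of_equivalence_of_le
      (r := fun x y : Fin (2 ^ m) => x.val >>> i = y.val >>> i)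
      ⟨fun _ => rfl, Eq.symm, Eq.trans⟩ (fun x y hxy => ?_) u v
    obtain ⟨j, hj, hadj⟩ := (unionUpTo_adj _ _).mp hxy
    rw [levelSeq_getD (by omega)] at hadj
    exact Nat.shiftRight_eq_shiftRight_of_le hj (levelGraph_adj.mp hadj).1
  · induction i generalizing u v with
    | zero => exact fun h => (Fin.ext h : u = v) ▸ .rfl
    | succ i ih =>
      intro h
      rw [unionUpTo_succ, levelSeq_getD hi]
      by_cases h' : u.val >>> i = v.val >>> i
      · exact (ih (by omega) u v h').mono le_sup_left
      · exact (Adj.reachable (levelGraph_adj.mpr ⟨h, h'⟩)).mono le_sup_right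

lemma isIteratedMatchingSeq_levelSeq (m : ℕ) : IsIteratedMatchingSeq (levelSeq m) := by
  rw [isIteratedMatchingSeq_iff, levelSeq_length]
  intro i hi
  rw [reachable_unionUpTo_levelSeq hi.le, levelSeq_getD hi]
  exact isMatchingStep_levelGraph hi

lemma exists_levelGraph_adj {u v : Fin (2 ^ m)} (huv : u ≠ v) {i : ℕ}
    (h : u.val >>> i = v.val >>> i) : ∃ j < i, (levelGraph m j).Adj u v := by
  induction i with
  | zero => exact (huv (Fin.ext h)).elim
  | succ i ih =>
    by_cases h' : u.val >>> i = v.val >>> i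
    · obtain ⟨j, hj, hadj⟩ := ih h'
      exact ⟨j, by omega, hadj⟩
    · exact ⟨i, by omega, levelGraph_adj.mpr ⟨h, h'⟩⟩

lemma isFullSeq_levelSeq (m : ℕ) : IsFullSeq (levelSeq m) := by
  intro u v huv
  obtain ⟨j, hj, hadj⟩ := exists_levelGraph_adj huv (i := m)
    (by simp only [Nat.shiftRight_eq_zero _ _ (Fin.is_lt _)])
  exact ⟨j, by rwa [levelSeq_length], by rwa [levelSeq_getD hj]⟩

def levelFullSeq (m : ℕ) : FullMatchingSeq (Fin (2 ^ m)) :=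
  ⟨levelSeq m, isIteratedMatchingSeq_levelSeq m, isFullSeq_levelSeq m⟩

lemma equiv_simpleGraph_levelGraph {π : Equiv.Perm (Fin (2 ^ m))} (hπ : π ∈ treeAut m)
    (i : ℕ) : π.simpleGraph (levelGraph m i) = levelGraph m i := by
  have hπ' := (treeAut m).inv_mem hπ
  ext u v
  rw [Equiv.simpleGraph_apply, comap_adj, levelGraph_adj, levelGraph_adj, ← Equiv.Perm.inv_def,
    ne_eq, hπ' (i + 1), hπ' i]

lemma levelFullSeq_mem_fixedPoints (m : ℕ) :
    levelFullSeq m ∈ MulAction.fixedPoints (treeAut m) (FullMatchingSeq (Fin (2 ^ m))) :=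
  fun π => Subtype.ext <| by
    simp only [Subgroup.smul_def, FullMatchingSeq.smul_val, levelFullSeq, levelSeq, List.map_map]
    exact List.map_congr_left fun i _ => equiv_simpleGraph_levelGraph π.2 i

lemma eq_levelGraph_of_isMatchingStep {i : ℕ} (hi : i < m) {H : SimpleGraph (Fin (2 ^ m))}
    (hH : IsMatchingStep (fun u v : Fin (2 ^ m) => u.val >>> i = v.val >>> i) H)
    (hinv : ∀ π ∈ treeAut m, π.simpleGraph H = H) : H = levelGraph m i := by
  have hblock {u v : Fin (2 ^ m)} (huv : H.Adj u v) : u.val >>> (i + 1) = v.val >>> (i + 1) := by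
    by_contra hne
    -- swapping the halves of `v`'s block would make `v` and its sibling both partners of `u`
    set π := swapHalves hi (v.val >>> (i + 1))
    have hπu : π u = u := by simp [π, swapHalves_apply, hne]
    have hπv : π v = flipBit hi v := by simp [π, swapHalves_apply]
    have h' : H.Adj u (flipBit hi v) := by
      rw [← hπu, ← hπv]
      exact (adj_apply_iff_of_equiv_simpleGraph_eq (hinv π (swapHalves_mem_treeAut hi _))).mpr huv
    exact Nat.xor_two_pow_shiftRight_ne v.val i (hH.rel_of_adj_of_adj huv.symm h').symm
  ext u v
  refine ⟨fun h => levelGraph_adj.mpr ⟨hblock h, hH.not_rel_of_adj h⟩, fun h => ?_⟩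
  obtain ⟨h₁, h₂⟩ := levelGraph_adj.mp h
  obtain ⟨w, huw⟩ := hH.exists_adj u
  exact hH.adj_of_rel huw rfl
    (Nat.shiftRight_eq_of_ne_of_ne h₁.symm (hblock huw) h₂.symm (hH.not_rel_of_adj huw))

lemma eq_levelFullSeq_of_mem_fixedPoints {E : FullMatchingSeq (Fin (2 ^ m))}
    (hE : E ∈ MulAction.fixedPoints (treeAut m) (FullMatchingSeq (Fin (2 ^ m)))) :
    E = levelFullSeq m := by
  have hlen : E.1.length = m := by
    rw [E.length_eq, Nat.card_fin, Nat.log_pow one_lt_two]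
  have hinv (i : ℕ) : ∀ π ∈ treeAut m, π.simpleGraph (E.1.getD i ⊥) = E.1.getD i ⊥ :=
    fun π hπ => by rw [← getD_map_equiv_simpleGraph, ← FullMatchingSeq.smul_val,
      ← Subgroup.mk_smul π hπ, hE ⟨π, hπ⟩]
  have hgetD (i : ℕ) : i < m → E.1.getD i ⊥ = levelGraph m i := by
    induction i using Nat.strong_induction_on with
    | _ i ih =>
      intro hi
      have hU : unionUpTo E.1 i = unionUpTo (levelSeq m) i :=
        unionUpTo_congr fun j hj => by rw [ih j hj (by omega), levelSeq_getD (by omega)]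
      have hstep := isIteratedMatchingSeq_iff.mp E.2.1 i (by omega)
      rw [hU, reachable_unionUpTo_levelSeq hi.le] at hstep
      exact eq_levelGraph_of_isMatchingStep hi hstep (hinv i)
  refine Subtype.ext (List.ext_getElem (by rw [hlen, levelFullSeq, levelSeq_length]) ?_)
  intro i h₁ h₂
  have hi : i < m := hlen ▸ h₁
  rw [← List.getD_eq_getElem _ ⊥ h₁, ← List.getD_eq_getElem _ ⊥ h₂, hgetD i hi]
  exact (levelSeq_getD hi).symm

lemma card_fixedPoints_treeAut (m : ℕ) :
    Nat.card (MulAction.fixedPoints (treeAut m) (FullMatchingSeq (Fin (2 ^ m)))) = 1 :=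
  Nat.card_eq_one_iff_exists.mpr ⟨⟨_, levelFullSeq_mem_fixedPoints m⟩, fun E =>
    Subtype.ext (eq_levelFullSeq_of_mem_fixedPoints E.2)⟩

/-- **Counting full iterated matching sequences (Specker).**
f_M(n) = 0 whenever n is not a power of 2, and f_M(n) ≡ 1 (mod 2) whenever n = 2^m. -/
theorem fM_eq_zero_or_odd :
    (∀ n : ℕ, (¬ ∃ m : ℕ, n = 2 ^ m) → fM n = 0) ∧
    (∀ m : ℕ, fM (2 ^ m) ≡ 1 [MOD 2]) := by
  refine ⟨fun n hn => fM_eq_zero_of_ne_two_pow hn, fun m => ?_⟩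
  have : Fact (Nat.Prime 2) := ⟨Nat.prime_two⟩
  have hmod := (isPGroup_treeAut m).card_modEq_card_fixedPoints (FullMatchingSeq (Fin (2 ^ m)))
  rwa [card_fixedPoints_treeAut] at hmod
end

section
/- Let p be a prime. The number of partitions of [n] = {1,…,n} into blocks each of size exactly p (perfect p-matchings over [n]) is 0 unless p divides n, and when p divides n this number is congruent to 1 modulo p. -/
/-!
Let the cyclic group `G = ℤ/p` act on `G ⊕ [k]` by translation on `G` and trivially on `[k]`.
A perfect `p`-matching is fixed by `G` exactly when it has `G` itself as a block: the block
through a point of `G` is either `G`, or it contains a fixed point of `[k]` and is then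
`G`-invariant, hence contains all of `G` and one more point, too many for a block. The fixed
matchings are therefore the matchings of `[k]` with the block `G` added, and since the
non-trivial orbits of a `p`-group have size divisible by `p`, the numbers of matchings of
`[p + k]` and of `[k]` agree modulo `p`. Induction from the unique matching of `[0]` gives `1`;
when `p ∤ n` there is no matching at all, because the block sizes add up to `n`.
-/

/-- The number of perfect p-matchings over [n], i.e. partitions of [n] into blocks of
size exactly p. -/
noncomputable def perfectPMatchings (p n : ℕ) : ℕ :=
  Nat.card { P : Finpartition (Finset.univ : Finset (Fin n)) //
    ∀ b ∈ P.parts, b.card = p }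

open Finset

namespace Finpartition

variable {α β : Type*} [DecidableEq α] [DecidableEq β] {s : Finset α} {t : Finset β}

def mapOfEmbedding (f : α ↪ β) (h : s.map f = t) (P : Finpartition s) : Finpartition t where
  parts := P.parts.map (mapEmbedding f).toEmbedding
  supIndep := by
    rw [supIndep_iff_pairwiseDisjoint, coe_map]
    rintro _ ⟨b, hb, rfl⟩ _ ⟨c, hc, rfl⟩ hbc
    exact (disjoint_map f).mpr (P.disjoint hb hc (ne_of_apply_ne _ hbc))
  sup_parts := by
    ext y
    simp only [mem_sup, ← h, ← P.sup_parts, mem_map, id, RelEmbedding.coe_toEmbedding,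
      mapEmbedding_apply, exists_exists_and_eq_and]
    grind
  bot_notMem := by simp

def comapOfEmbedding (f : α ↪ β) (h : s.map f = t) (P : Finpartition t) : Finpartition s where
  parts := P.parts.image fun b ↦ {x ∈ s | f x ∈ b}
  supIndep := by
    rw [supIndep_iff_pairwiseDisjoint, coe_image]
    rintro _ ⟨b, hb, rfl⟩ _ ⟨c, hc, rfl⟩ hbc
    have hbc : Disjoint b c := P.disjoint hb hc fun hbc' ↦ hbc (hbc' ▸ rfl)
    exact disjoint_left.mpr fun x hxb hxc ↦
      disjoint_left.mp hbc (mem_filter.mp hxb).2 (mem_filter.mp hxc).2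
  sup_parts := by
    ext x
    simp only [mem_sup, mem_image, id, exists_exists_and_eq_and, mem_filter]
    refine ⟨fun ⟨_, _, hx, _⟩ ↦ hx, fun hx ↦ ?_⟩
    obtain ⟨b, hb, hxb⟩ := P.exists_mem (h ▸ mem_map_of_mem f hx)
    exact ⟨b, hb, hx, hxb⟩
  bot_notMem := by
    simp only [bot_eq_empty, mem_image, not_exists, not_and]
    intro b hb hempty
    obtain ⟨y, hy⟩ := P.nonempty_of_mem_parts hb
    obtain ⟨x, hx, rfl⟩ := mem_map.mp (h ▸ P.le hb hy)
    exact filter_eq_empty_iff.mp hempty hx hy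

@[simp]
lemma parts_mapOfEmbedding (f : α ↪ β) (h : s.map f = t) (P : Finpartition s) :
    (P.mapOfEmbedding f h).parts = P.parts.map (mapEmbedding f).toEmbedding := rfl

@[simp]
lemma parts_comapOfEmbedding (f : α ↪ β) (h : s.map f = t) (P : Finpartition t) :
    (P.comapOfEmbedding f h).parts = P.parts.image fun b ↦ {x ∈ s | f x ∈ b} := rfl

def equivOfEmbedding (f : α ↪ β) (h : s.map f = t) : Finpartition s ≃ Finpartition t where
  toFun := mapOfEmbedding f h
  invFun := comapOfEmbedding f h
  left_inv P := by
    ext b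
    simp only [parts_comapOfEmbedding, parts_mapOfEmbedding, map_eq_image, image_image]
    rw [image_congr (g := id), image_id]
    intro c hc
    simp [filter_mem_eq_inter, inter_eq_right.mpr (P.le hc)]
  right_inv P := by
    ext b
    simp only [parts_comapOfEmbedding, parts_mapOfEmbedding, map_eq_image, image_image]
    rw [image_congr (g := id), image_id]
    intro c hc
    calc ({x ∈ s | f x ∈ c}).map f = {y ∈ s.map f | y ∈ c} := by rw [filter_map]; rfl
      _ = c := by rw [h, filter_mem_eq_inter, inter_eq_right.mpr (P.le hc)]

lemma sup_erase_parts {B : Finset α} {P : Finpartition s} (hB : B ∈ P.parts) :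
    (P.parts.erase B).sup id = s \ B := by
  ext x
  simp only [mem_sup, mem_erase, id, mem_sdiff]
  constructor
  · rintro ⟨b, ⟨hbB, hb⟩, hx⟩
    exact ⟨P.le hb hx, fun hxB ↦ hbB (P.eq_of_mem_parts hb hB hx hxB)⟩
  · rintro ⟨hxs, hxB⟩
    obtain ⟨b, hb, hxb⟩ := P.exists_mem hxs
    exact ⟨b, ⟨fun hbB ↦ hxB (hbB ▸ hxb), hb⟩, hxb⟩

end Finpartition

variable {α β : Type*}

abbrev PerfectPMatching [DecidableEq α] (p : ℕ) (s : Finset α) :=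
  {P : Finpartition s // ∀ b ∈ P.parts, #b = p}

namespace PerfectPMatching

variable [DecidableEq α] {p : ℕ} {s B : Finset α}

def equivOfEmbedding [DecidableEq β] {t : Finset β} (f : α ↪ β) (h : s.map f = t) :
    PerfectPMatching p s ≃ PerfectPMatching p t :=
  (Finpartition.equivOfEmbedding f h).subtypeEquiv fun P ↦ by
    simp [Finpartition.equivOfEmbedding]

lemma dvd_card (P : PerfectPMatching p s) : p ∣ #s :=
  ⟨#P.1.parts, by
    rw [← P.1.sum_card_parts, sum_congr rfl P.2, sum_const, smul_eq_mul, mul_comm]⟩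

instance : Unique (PerfectPMatching p (⊥ : Finset α)) where
  default := ⟨Finpartition.empty _, by simp⟩
  uniq _ := Subtype.ext (Subsingleton.elim _ _)

def eraseEquiv (hBs : B ⊆ s) (hB : B.Nonempty) (hBp : #B = p) :
    {P : PerfectPMatching p s // B ∈ P.1.parts} ≃ PerfectPMatching p (s \ B) where
  toFun P := ⟨P.1.1.ofSubset (erase_subset B _) (Finpartition.sup_erase_parts P.2),
    fun b hb ↦ P.1.2 b (mem_of_mem_erase hb)⟩
  invFun Q := ⟨⟨Q.1.extend hB.ne_empty sdiff_disjoint (sdiff_union_of_subset hBs), by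
    simp only [Finpartition.extend_parts, forall_mem_insert]
    exact ⟨hBp, Q.2⟩⟩, by simp⟩
  left_inv P := by
    ext b
    simp [insert_erase P.2]
  right_inv Q := by
    ext b
    suffices b ∈ Q.1.parts → b ≠ B by simpa
    rintro hb rfl
    obtain ⟨x, hx⟩ := Q.1.nonempty_of_mem_parts hb
    exact (mem_sdiff.mp (Q.1.le hb hx)).2 hx

section Action

variable {G : Type*} [Group G] [Fintype α] [MulAction G α]

open Pointwise

instance : SMul G (PerfectPMatching p (univ : Finset α)) where
  smul g := equivOfEmbedding (MulAction.toPerm g).toEmbedding (map_univ_equiv _)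

lemma parts_smul (g : G) (P : PerfectPMatching p (univ : Finset α)) :
    (g • P).1.parts = P.1.parts.image (g • ·) := by
  change P.1.parts.map _ = _
  ext b
  simp only [map_eq_image, RelEmbedding.coe_toEmbedding, mem_image, mapEmbedding_apply,
    Function.Embedding.coeFn_mk, smul_finset_def]
  rfl

instance : MulAction G (PerfectPMatching p (univ : Finset α)) where
  one_smul P := by
    ext b
    simp [parts_smul]
  mul_smul g h P := by
    ext b
    simp [parts_smul, mul_smul, image_image, Function.comp_def]

end Action

end PerfectPMatching

section SumInlAction

open MulAction Pointwise

variable {G : Type*} [Group G]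

variable (G β) in
abbrev sumInlMulAction : MulAction G (G ⊕ β) where
  smul g := Sum.map (g * ·) id
  one_smul := by rintro (x | y) <;> simp [HSMul.hSMul]
  mul_smul g h := by rintro (x | y) <;> simp [HSMul.hSMul, mul_assoc]

attribute [local instance] sumInlMulAction

@[simp]
lemma sumInlMulAction_smul_inl (g x : G) : g • (Sum.inl x : G ⊕ β) = Sum.inl (g * x) := rfl

variable [Fintype G] [DecidableEq G] [DecidableEq β]

lemma smul_map_inl_univ (g : G) : g • (univ.map .inl : Finset (G ⊕ β)) = univ.map .inl := by
  ext (x | y)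
  · simpa [mem_smul_finset] using ⟨g⁻¹ * x, by group⟩
  · simp [mem_smul_finset]

lemma smul_eq_self_of_disjoint_map_inl {c : Finset (G ⊕ β)} (hc : Disjoint c (univ.map .inl))
    (g : G) : g • c = c := by
  have hfix : ∀ x ∈ c, g • x = x := by
    rintro (x | y) hx
    · exact absurd (by simp) (disjoint_left.mp hc hx)
    · rfl
  rw [smul_finset_def, image_congr hfix, image_id']

variable [Fintype β]

lemma PerfectPMatching.map_inl_mem_parts_of_mem_fixedPoints
    {P : PerfectPMatching (Fintype.card G) (univ : Finset (G ⊕ β))}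
    (hP : P ∈ fixedPoints G _) : univ.map .inl ∈ P.1.parts := by
  have hmem : ∀ g : G, ∀ b ∈ P.1.parts, g • b ∈ P.1.parts := fun g b hb ↦ by
    rw [← mem_fixedPoints.mp hP g, PerfectPMatching.parts_smul]
    exact mem_image_of_mem _ hb
  set B := P.1.part (.inl 1)
  have hB : B ∈ P.1.parts := P.1.part_mem.mpr (mem_univ _)
  have h1B : .inl 1 ∈ B := P.1.mem_part_self.mpr (mem_univ _)
  have hBsub : B ⊆ univ.map .inl := by
    rintro (x | y) hy
    · simp
    have hinv : ∀ g : G, g • B = B := fun g ↦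
      P.1.eq_of_mem_parts (hmem g B hB) hB (smul_mem_smul_finset (a := g) hy) hy
    have hsub : insert (.inr y) (univ.map .inl) ⊆ B := by
      rw [insert_subset_iff]
      refine ⟨hy, fun x hx ↦ ?_⟩
      obtain ⟨g, -, rfl⟩ := mem_map.mp hx
      simpa [hinv g] using smul_mem_smul_finset (a := g) h1B
    have := card_le_card hsub
    simp [P.2 B hB] at this
  rwa [← eq_of_subset_of_card_le hBsub (by simp [P.2 B hB])]

lemma PerfectPMatching.mem_fixedPoints_of_map_inl_mem_parts
    {P : PerfectPMatching (Fintype.card G) (univ : Finset (G ⊕ β))}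
    (hB : univ.map .inl ∈ P.1.parts) : P ∈ fixedPoints G _ := by
  refine mem_fixedPoints.mpr fun g ↦ Subtype.ext (Finpartition.ext ?_)
  rw [PerfectPMatching.parts_smul, image_congr (g := id), image_id]
  intro c hc
  by_cases hcB : c = univ.map .inl
  · exact hcB ▸ smul_map_inl_univ g
  · exact smul_eq_self_of_disjoint_map_inl (P.1.disjoint hc hB hcB) g

noncomputable def PerfectPMatching.fixedPointsEquiv :
    fixedPoints G (PerfectPMatching (Fintype.card G) (univ : Finset (G ⊕ β))) ≃
      PerfectPMatching (Fintype.card G) (univ : Finset β) :=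
  (Equiv.subtypeEquivRight fun _ ↦ ⟨PerfectPMatching.map_inl_mem_parts_of_mem_fixedPoints,
    PerfectPMatching.mem_fixedPoints_of_map_inl_mem_parts⟩).trans <|
    (PerfectPMatching.eraseEquiv (subset_univ _) (univ_nonempty.map) (by simp)).trans
      (PerfectPMatching.equivOfEmbedding .inr (by ext (x | y) <;> simp)).symm

lemma card_perfectPMatching_sum_modEq {p : ℕ} [Fact p.Prime] (hG : IsPGroup p G) :
    Nat.card (PerfectPMatching (Fintype.card G) (univ : Finset (G ⊕ β))) ≡
      Nat.card (PerfectPMatching (Fintype.card G) (univ : Finset β)) [MOD p] := by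
  rw [← Nat.card_congr (PerfectPMatching.fixedPointsEquiv (G := G) (β := β))]
  exact hG.card_modEq_card_fixedPoints _

end SumInlAction

lemma card_perfectPMatching_fin_add_modEq {p : ℕ} (hp : p.Prime) (k : ℕ) :
    Nat.card (PerfectPMatching p (univ : Finset (Fin (p + k)))) ≡
      Nat.card (PerfectPMatching p (univ : Finset (Fin k))) [MOD p] := by
  have := Fact.mk hp
  have hG : Fintype.card (Multiplicative (ZMod p)) = p := by simp
  have hpG : IsPGroup p (Multiplicative (ZMod p)) :=
    .of_card (n := 1) (by simp [Nat.card_eq_fintype_card, hG])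
  have e : Fin (p + k) ≃ Multiplicative (ZMod p) ⊕ Fin k := Fintype.equivOfCardEq (by simp [hG])
  rw [Nat.card_congr (PerfectPMatching.equivOfEmbedding e.toEmbedding (map_univ_equiv e))]
  simpa only [hG] using card_perfectPMatching_sum_modEq (β := Fin k) hpG

lemma perfectPMatchings_eq_card (p n : ℕ) :
    perfectPMatchings p n = Nat.card (PerfectPMatching p (univ : Finset (Fin n))) := rfl

/-- **Counting perfect p-matchings.**
For a prime p, the number of partitions of [n] into blocks of size exactly p is 0
unless p divides n, and is congruent to 1 modulo p when p divides n. -/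
theorem perfectPMatchings_count (p : ℕ) (hp : p.Prime) (n : ℕ) :
    (¬ p ∣ n → perfectPMatchings p n = 0) ∧
    (p ∣ n → perfectPMatchings p n ≡ 1 [MOD p]) := by
  simp only [perfectPMatchings_eq_card]
  refine ⟨fun hpn ↦ ?_, ?_⟩
  · have : IsEmpty (PerfectPMatching p (univ : Finset (Fin n))) :=
      ⟨fun P ↦ hpn (by simpa using P.dvd_card)⟩
    exact Nat.card_of_isEmpty
  · rintro ⟨m, rfl⟩
    induction m with
    | zero => rw [mul_zero, univ_eq_empty, ← bot_eq_empty, Nat.card_unique]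
    | succ m ih =>
      rw [mul_add_one, add_comm]
      exact (card_perfectPMatching_fin_add_modEq hp _).trans ih
end

section
/- Fix nonnegative integers r and k. Let S_{k,r}(n) denote the number of partitions of the set [r+n] = {1,…,r+n} into exactly k+r blocks such that the elements 1,…,r lie in distinct blocks, and let B_r(n) = Σ_k S_{k,r}(n) denote the number of partitions of [r+n] such that 1,…,r lie in distinct blocks. Then both sequences n ↦ S_{k,r}(n) (the restricted Stirling numbers of the second kind) and n ↦ B_r(n) (the restricted Bell numbers) are MC-finite. -/
/-- The restricted Stirling number of the second kind S_{k,r}(n): the number of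
partitions of [r+n] into exactly k+r blocks such that the first r elements lie in
distinct blocks. -/
noncomputable def restrictedStirling (r k n : ℕ) : ℕ :=
  Nat.card { P : Finpartition (Finset.univ : Finset (Fin (r + n))) //
    P.parts.card = k + r ∧
    ∀ b ∈ P.parts, (b.filter fun x : Fin (r + n) => (x : ℕ) < r).card ≤ 1 }

/-- The restricted Bell number B_r(n): the number of partitions of [r+n] such that the
first r elements lie in distinct blocks (equivalently, Σ_k S_{k,r}(n)). -/
noncomputable def restrictedBell (r n : ℕ) : ℕ :=
  Nat.card { P : Finpartition (Finset.univ : Finset (Fin (r + n))) //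
    ∀ b ∈ P.parts, (b.filter fun x : Fin (r + n) => (x : ℕ) < r).card ≤ 1 }


/-!
Encode a partition of `Fin N` by the map sending each element to the least element of its block:
blocks correspond to fixed points, and the first `r` elements lie in distinct blocks iff they are
fixed. Removing the largest element shows that the sums `W_n(w) = Σ_P w(#blocks P)` over
restricted partitions of `Fin (r + n)` satisfy `W_{n+1}(w) = W_n(T w)` with
`T w t = w (t + 1) + t • w t`, hence `W_n(w) = W_0(Tⁿ w)`. Modulo `m`, `T` preserves the finite set
of weights vanishing beyond `k + r`, which contains the indicator of `k + r` giving `S_{k,r}`, and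
the finite set of weights factoring through `ℕ → ZMod m`, which contains the constant `1` giving
`B_r`. An orbit in a finite set is ultimately periodic.
-/

open Finset Function

instance Setoid.decidableRelKer {α β : Type*} [DecidableEq β] (f : α → β) :
    DecidableRel (Setoid.ker f) := fun x y =>
  inferInstanceAs (Decidable (f x = f y))

lemma Finpartition.mem_parts_iff_exists_part_eq {β : Type*} [DecidableEq β] {s : Finset β}
    (P : Finpartition s) {t : Finset β} : t ∈ P.parts ↔ ∃ x ∈ s, P.part x = t :=
  ⟨fun ht => P.part_surjOn ht, fun ⟨_, hx, hxt⟩ => hxt ▸ P.part_mem.2 hx⟩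

lemma Finpartition.ext_part {β : Type*} [DecidableEq β] {s : Finset β} {P Q : Finpartition s}
    (h : ∀ x ∈ s, P.part x = Q.part x) : P = Q := by
  ext t
  simp only [mem_parts_iff_exists_part_eq]
  exact exists_congr fun x => and_congr_right fun hx => by rw [h x hx]

section BlockMinMap

variable {α : Type*} [LinearOrder α]

/-- `f` sends every element to the least element of its block, for the partition of `α`
into the fibres of `f`. -/
def IsBlockMinMap (f : α → α) : Prop := (∀ x, f (f x) = f x) ∧ ∀ x, f x ≤ x

instance [Fintype α] : DecidablePred (IsBlockMinMap (α := α)) := fun f =>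
  inferInstanceAs (Decidable ((∀ x, f (f x) = f x) ∧ ∀ x, f x ≤ x))

def numFixed [Fintype α] (f : α → α) : ℕ := #{x | f x = x}

namespace Finpartition

variable [Fintype α] (P : Finpartition (univ : Finset α))

def blockMin (x : α) : α := (P.part x).min' (P.part_nonempty.2 (mem_univ x))

lemma blockMin_mem_part (x : α) : P.blockMin x ∈ P.part x := min'_mem _ _

lemma blockMin_le (x : α) : P.blockMin x ≤ x := min'_le _ _ (P.mem_part (mem_univ x))

lemma blockMin_eq_blockMin_iff {x y : α} : P.blockMin x = P.blockMin y ↔ P.part x = P.part y := by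
  refine ⟨fun h => ?_, fun h => by simp only [blockMin, h]⟩
  rw [← P.part_eq_of_mem (P.part_mem.2 (mem_univ x)) (P.blockMin_mem_part x), h,
    P.part_eq_of_mem (P.part_mem.2 (mem_univ y)) (P.blockMin_mem_part y)]

lemma part_blockMin (x : α) : P.part (P.blockMin x) = P.part x :=
  P.part_eq_of_mem (P.part_mem.2 (mem_univ x)) (P.blockMin_mem_part x)

lemma isBlockMinMap_blockMin : IsBlockMinMap P.blockMin :=
  ⟨fun x => (P.blockMin_eq_blockMin_iff).2 (P.part_blockMin x), P.blockMin_le⟩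

lemma card_parts_eq_numFixed : #P.parts = numFixed P.blockMin := by
  symm
  refine card_bij (fun x _ => P.part x) (fun x _ => P.part_mem.2 (mem_univ x)) ?_ ?_
  · intro x hx y hy hxy
    rw [mem_filter] at hx hy
    rw [← hx.2, ← hy.2, P.blockMin_eq_blockMin_iff, hxy]
  · intro t ht
    obtain ⟨x, -, rfl⟩ := (P.mem_parts_iff_exists_part_eq).1 ht
    exact ⟨P.blockMin x, by simp [(P.isBlockMinMap_blockMin).1], P.part_blockMin x⟩

variable {P}

lemma blockMin_ofSetoid_ker {f : α → α} (hf : IsBlockMinMap f) :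
    (ofSetoid (Setoid.ker f)).blockMin = f := by
  funext x
  have mem_iff : ∀ y, y ∈ (ofSetoid (Setoid.ker f)).part x ↔ f x = f y := fun y =>
    mem_part_ofSetoid_iff_rel
  refine le_antisymm (min'_le _ _ ((mem_iff _).2 (hf.1 x).symm)) (le_min' _ _ _ fun y hy => ?_)
  rw [(mem_iff y).1 hy]
  exact hf.2 y

lemma ofSetoid_ker_blockMin : ofSetoid (Setoid.ker P.blockMin) = P :=
  ext_part fun x _ => by
    ext y
    rw [mem_part_ofSetoid_iff_rel, Setoid.ker_def, P.blockMin_eq_blockMin_iff,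
      P.mem_part_iff_part_eq_part (mem_univ y) (mem_univ x), eq_comm]

lemma forall_card_filter_le_one_iff {p : α → Prop} [DecidablePred p]
    (hp : ∀ ⦃x y⦄, x ≤ y → p y → p x) :
    (∀ t ∈ P.parts, #{x ∈ t | p x} ≤ 1) ↔ ∀ x, p x → P.blockMin x = x := by
  constructor
  · intro h x hx
    refine card_le_one.1 (h _ (P.part_mem.2 (mem_univ x))) _ ?_ _ ?_ <;> rw [mem_filter]
    exacts [⟨P.blockMin_mem_part x, hp (P.blockMin_le x) hx⟩, ⟨P.mem_part (mem_univ x), hx⟩]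
  · intro h t ht
    refine card_le_one.2 fun x hx y hy => ?_
    rw [mem_filter] at hx hy
    rw [← h x hx.2, ← h y hy.2, P.blockMin_eq_blockMin_iff, P.part_eq_of_mem ht hx.1,
      P.part_eq_of_mem ht hy.1]

variable (α) in
def equivBlockMinMap : Finpartition (univ : Finset α) ≃ {f : α → α // IsBlockMinMap f} where
  toFun P := ⟨P.blockMin, P.isBlockMinMap_blockMin⟩
  invFun f := ofSetoid (Setoid.ker f.1)
  left_inv _ := ofSetoid_ker_blockMin
  right_inv f := Subtype.ext (blockMin_ofSetoid_ker f.2)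

end Finpartition

end BlockMinMap

abbrev RestrictedMinMap (r N : ℕ) : Type :=
  {f : Fin N → Fin N // IsBlockMinMap f ∧ ∀ x : Fin N, (x : ℕ) < r → f x = x}

namespace RestrictedMinMap

variable {r N : ℕ}

def restrictFn (f : Fin (N + 1) → Fin (N + 1)) (hf : ∀ x, f x ≤ x) (i : Fin N) : Fin N :=
  (f i.castSucc).castLT (lt_of_le_of_lt (hf _) i.castSucc_lt_last)

@[simp]
lemma castSucc_restrictFn (f : Fin (N + 1) → Fin (N + 1)) (hf : ∀ x, f x ≤ x) (i : Fin N) :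
    (restrictFn f hf i).castSucc = f i.castSucc :=
  Fin.castSucc_castLT _ _

def restrict (f : RestrictedMinMap r (N + 1)) : RestrictedMinMap r N := by
  refine ⟨restrictFn f.1 f.2.1.2, ⟨fun x => ?_, fun x => ?_⟩, fun x hx => ?_⟩
  · rw [← Fin.castSucc_inj]
    simp [f.2.1.1]
  · rw [← Fin.castSucc_le_castSucc_iff]
    simpa using f.2.1.2 _
  · rw [← Fin.castSucc_inj]
    simpa using f.2.2 _ hx

@[simp]
lemma castSucc_restrict (f : RestrictedMinMap r (N + 1)) (i : Fin N) :
    ((restrict f).1 i).castSucc = f.1 i.castSucc :=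
  castSucc_restrictFn _ f.2.1.2 _

def extendFn (g : Fin N → Fin N) (y : Fin (N + 1)) : Fin (N + 1) → Fin (N + 1) :=
  Fin.lastCases y fun i => (g i).castSucc

@[simp] lemma extendFn_last (g : Fin N → Fin N) (y : Fin (N + 1)) :
    extendFn g y (Fin.last N) = y := Fin.lastCases_last

@[simp] lemma extendFn_castSucc (g : Fin N → Fin N) (y : Fin (N + 1)) (i : Fin N) :
    extendFn g y i.castSucc = (g i).castSucc := Fin.lastCases_castSucc _

def lastValue (g : Fin N → Fin N) (o : Option {x // g x = x}) : Fin (N + 1) :=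
  o.elim (Fin.last N) fun x => x.1.castSucc

def extend (hr : r ≤ N) (g : RestrictedMinMap r N) (o : Option {x // g.1 x = x}) :
    RestrictedMinMap r (N + 1) := by
  refine ⟨extendFn g.1 (lastValue g.1 o), ⟨fun x => ?_, fun x => ?_⟩, fun x hx => ?_⟩
  · induction x using Fin.lastCases <;> rcases o with _ | ⟨y, hy⟩ <;> simp [lastValue, g.2.1.1, *]
  · induction x using Fin.lastCases
    · simp [Fin.le_last]
    · simpa using g.2.1.2 _
  · induction x using Fin.lastCases
    · simp only [Fin.val_last] at hx
      omega
    · simpa using g.2.2 _ hx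

@[simp]
lemma extend_val (hr : r ≤ N) (g : RestrictedMinMap r N) (o : Option {x // g.1 x = x}) :
    (extend hr g o).1 = extendFn g.1 (lastValue g.1 o) := rfl

lemma restrict_extend (hr : r ≤ N) (g : RestrictedMinMap r N) (o : Option {x // g.1 x = x}) :
    restrict (extend hr g o) = g :=
  Subtype.ext <| funext fun i => by rw [← Fin.castSucc_inj]; simp

/-- The new element `N` either opens a block of its own or joins the block whose least
element is a fixed point `x` of `g`. -/
def fiberEquiv (hr : r ≤ N) (g : RestrictedMinMap r N) :
    {f : RestrictedMinMap r (N + 1) // restrict f = g} ≃ Option {x // g.1 x = x} where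
  toFun f :=
    if h : f.1.1 (Fin.last N) = Fin.last N then none
    else some ⟨(f.1.1 (Fin.last N)).castLT (Fin.val_lt_last h), by
      obtain ⟨f, rfl⟩ := f; rw [← Fin.castSucc_inj]; simp [f.2.1.1]⟩
  invFun o := ⟨extend hr g o, restrict_extend hr g o⟩
  left_inv := by
    rintro ⟨f, rfl⟩
    refine Subtype.ext <| Subtype.ext <| funext fun x => ?_
    induction x using Fin.lastCases
    · by_cases h : f.1 (Fin.last N) = Fin.last N <;> simp [h, lastValue]
    · simp
  right_inv := by
    rintro (_ | ⟨x, hx⟩) <;> simp [lastValue, Fin.castSucc_ne_last]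

def succEquiv (hr : r ≤ N) :
    RestrictedMinMap r (N + 1) ≃ Σ g : RestrictedMinMap r N, Option {x // g.1 x = x} :=
  (Equiv.sigmaFiberEquiv restrict).symm.trans (Equiv.sigmaCongrRight (fiberEquiv hr))

@[simp]
lemma succEquiv_symm_apply (hr : r ≤ N) (g : RestrictedMinMap r N) (o : Option {x // g.1 x = x}) :
    (succEquiv hr).symm ⟨g, o⟩ = extend hr g o := rfl

lemma numFixed_extendFn (g : Fin N → Fin N) (y : Fin (N + 1)) :
    numFixed (extendFn g y) = numFixed g + if y = Fin.last N then 1 else 0 := by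
  simp only [numFixed, card_filter, Fin.sum_univ_castSucc, extendFn_castSucc, Fin.castSucc_inj,
    extendFn_last]

theorem sum_numFixed_succ {M : Type*} [AddCommMonoid M] (hr : r ≤ N) (w : ℕ → M) :
    ∑ f : RestrictedMinMap r (N + 1), w (numFixed f.1) =
      ∑ g : RestrictedMinMap r N, (w (numFixed g.1 + 1) + numFixed g.1 • w (numFixed g.1)) := by
  rw [← (succEquiv hr).symm.sum_comp, Fintype.sum_sigma]
  refine sum_congr rfl fun g _ => ?_
  simp only [Fintype.sum_option, succEquiv_symm_apply, extend_val, numFixed_extendFn, lastValue,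
    Option.elim_none, Option.elim_some, if_pos, Fin.castSucc_ne_last, if_false, add_zero,
    sum_const, card_univ, Fintype.card_subtype]
  rfl

end RestrictedMinMap

def restrictedPartitionEquiv (r N : ℕ) :
    {P : Finpartition (univ : Finset (Fin N)) //
        ∀ t ∈ P.parts, #(t.filter fun x : Fin N => (x : ℕ) < r) ≤ 1} ≃ RestrictedMinMap r N :=
  (Equiv.subtypeEquiv (Finpartition.equivBlockMinMap (Fin N)) fun P =>
    P.forall_card_filter_le_one_iff (p := fun x : Fin N => (x : ℕ) < r)
      fun _ _ hxy hy => lt_of_le_of_lt hxy hy).trans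
    (Equiv.subtypeSubtypeEquivSubtypeInter _ _)

lemma card_parts_eq_numFixed_restrictedPartitionEquiv {r N : ℕ}
    (P : {P : Finpartition (univ : Finset (Fin N)) //
        ∀ t ∈ P.parts, #(t.filter fun x : Fin N => (x : ℕ) < r) ≤ 1}) :
    #P.1.parts = numFixed (restrictedPartitionEquiv r N P).1 :=
  P.1.card_parts_eq_numFixed

section WeightSum

variable {M : Type*} [AddCommMonoid M]

def blockStep (w : ℕ → M) (t : ℕ) : M := w (t + 1) + t • w t

def restrictedWeightSum (r n : ℕ) (w : ℕ → M) : M :=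
  ∑ f : RestrictedMinMap r (r + n), w (numFixed f.1)

lemma restrictedWeightSum_succ (r n : ℕ) (w : ℕ → M) :
    restrictedWeightSum r (n + 1) w = restrictedWeightSum r n (blockStep w) :=
  RestrictedMinMap.sum_numFixed_succ (Nat.le_add_right r n) w

lemma restrictedWeightSum_eq_iterate (r n : ℕ) (w : ℕ → M) :
    restrictedWeightSum r n w = restrictedWeightSum r 0 (blockStep^[n] w) := by
  induction n generalizing w with
  | zero => rfl
  | succ n ih => rw [restrictedWeightSum_succ, ih, ← iterate_succ_apply]

lemma natCast_restrictedWeightSum {R : Type*} [AddCommMonoidWithOne R] (r n : ℕ) (w : ℕ → ℕ) :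
    ((restrictedWeightSum r n w : ℕ) : R) = restrictedWeightSum r n fun t => (w t : R) :=
  Nat.cast_sum _ _

lemma restrictedStirling_eq_restrictedWeightSum (r k n : ℕ) :
    restrictedStirling r k n = restrictedWeightSum r n (Pi.single (k + r) 1) := by
  have e : {P : Finpartition (univ : Finset (Fin (r + n))) //
      #P.parts = k + r ∧ ∀ t ∈ P.parts, #(t.filter fun x : Fin (r + n) => (x : ℕ) < r) ≤ 1} ≃
      {f : RestrictedMinMap r (r + n) // numFixed f.1 = k + r} :=
    (Equiv.subtypeEquivRight fun _ => and_comm).trans <|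
      (Equiv.subtypeSubtypeEquivSubtypeInter _ _).symm.trans <|
        Equiv.subtypeEquiv (restrictedPartitionEquiv r (r + n)) fun P => by
          rw [card_parts_eq_numFixed_restrictedPartitionEquiv]
  rw [restrictedStirling, Nat.card_congr e, Nat.card_eq_fintype_card, Fintype.card_subtype,
    card_filter, restrictedWeightSum]
  simp only [Pi.single_apply]

lemma restrictedBell_eq_restrictedWeightSum (r n : ℕ) :
    restrictedBell r n = restrictedWeightSum r n 1 := by
  rw [restrictedBell, Nat.card_congr (restrictedPartitionEquiv r (r + n)),
    Nat.card_eq_fintype_card, Fintype.card_eq_sum_ones, restrictedWeightSum]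
  rfl

end WeightSum

theorem Set.Finite.exists_iterate_add_eq {Ω : Type*} {Φ : Ω → Ω} {s : Set Ω} (hs : s.Finite)
    (hΦ : Set.MapsTo Φ s s) {x : Ω} (hx : x ∈ s) :
    ∃ a p, 0 < p ∧ ∀ n, a ≤ n → Φ^[n + p] x = Φ^[n] x := by
  obtain ⟨i, j, hij, hx_eq⟩ := hs.exists_lt_map_eq_of_forall_mem (f := fun n => Φ^[n] x)
    (fun n => hΦ.iterate n hx)
  refine ⟨i, j - i, by omega, fun n hn => ?_⟩
  rw [show n + (j - i) = (n - i) + j by omega, iterate_add_apply, ← hx_eq, ← iterate_add_apply,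
    Nat.sub_add_cancel hn]

lemma mapsTo_blockStep_setOf_forall_gt_eq_zero {M : Type*} [AddCommMonoid M] (K : ℕ) :
    Set.MapsTo blockStep {w : ℕ → M | ∀ t, K < t → w t = 0}
      {w : ℕ → M | ∀ t, K < t → w t = 0} := fun w hw t ht => by
  simp [blockStep, hw t ht, hw (t + 1) (by omega)]

lemma finite_setOf_forall_gt_eq_zero {M : Type*} [Zero M] [Finite M] (K : ℕ) :
    {w : ℕ → M | ∀ t, K < t → w t = 0}.Finite := by
  refine Set.Finite.of_finite_image (f := fun w (i : Fin (K + 1)) => w i) (Set.toFinite _) ?_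
  intro w hw w' hw' h
  funext t
  by_cases ht : t ≤ K
  · exact congrFun h ⟨t, by omega⟩
  · rw [hw t (by omega), hw' t (by omega)]

/-- `t • x` in `ZMod m` only depends on `t mod m`. -/
lemma mapsTo_blockStep_range_comp_natCast (m : ℕ) :
    Set.MapsTo blockStep (Set.range fun v : ZMod m → ZMod m => v ∘ Nat.cast)
      (Set.range fun v : ZMod m → ZMod m => v ∘ Nat.cast) := by
  rintro _ ⟨v, rfl⟩
  exact ⟨fun j => v (j + 1) + j * v j, funext fun t => by simp [blockStep]⟩

theorem MCFinite.of_restrictedWeightSum {s : ℕ → ℕ} (r : ℕ)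
    (h : ∀ m, 2 ≤ m → ∃ S : Set (ℕ → ZMod m), S.Finite ∧ Set.MapsTo blockStep S S ∧
      ∃ w ∈ S, ∀ n, (s n : ZMod m) = restrictedWeightSum r n w) :
    MCFinite s := by
  intro m hm
  obtain ⟨S, hS, hstep, w, hw, hs⟩ := h m hm
  obtain ⟨a, p, hp, hper⟩ := hS.exists_iterate_add_eq hstep hw
  refine ⟨a, p, hp, fun n hn => ?_⟩
  rw [← ZMod.natCast_eq_natCast_iff, hs, hs, restrictedWeightSum_eq_iterate,
    restrictedWeightSum_eq_iterate r n, hper n hn]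

theorem restrictedStirling_mcFinite (r k : ℕ) : MCFinite (restrictedStirling r k) :=
  MCFinite.of_restrictedWeightSum r fun m hm => by
    have : NeZero m := ⟨by omega⟩
    refine ⟨_, finite_setOf_forall_gt_eq_zero (k + r),
      mapsTo_blockStep_setOf_forall_gt_eq_zero (k + r), Pi.single (k + r) 1,
      fun t ht => Pi.single_eq_of_ne ht.ne' _, fun n => ?_⟩
    rw [restrictedStirling_eq_restrictedWeightSum, natCast_restrictedWeightSum]
    congr 1
    funext t
    simp [Pi.single_apply]

theorem restrictedBell_mcFinite (r : ℕ) : MCFinite (restrictedBell r) :=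
  MCFinite.of_restrictedWeightSum r fun m hm => by
    have : NeZero m := ⟨by omega⟩
    refine ⟨_, Set.finite_range _, mapsTo_blockStep_range_comp_natCast m, 1, ⟨1, rfl⟩,
      fun n => ?_⟩
    rw [restrictedBell_eq_restrictedWeightSum, natCast_restrictedWeightSum]
    simp only [Pi.one_apply, Nat.cast_one]
    rfl

/-- **MC-finiteness of restricted Stirling and Bell numbers.**
For all fixed r and k, the sequences n ↦ S_{k,r}(n) and n ↦ B_r(n) are MC-finite. -/
theorem restrictedStirling_and_restrictedBell_mcfinite (r k : ℕ) :
    MCFinite (restrictedStirling r k) ∧ MCFinite (restrictedBell r) :=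
  ⟨restrictedStirling_mcFinite r k, restrictedBell_mcFinite r⟩
end
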